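/- arXiv:2204.11753 — 8 statements merged into one kernel-verified Lean document; each statement's English description precedes it below -/
import Mathlib

section
/- For every list of m jobs with positive integer lengths and every n machines with positive integer speeds r_1,…,r_n, there exists a fractional allocation of the jobs to the machines in which at most n−1 jobs are split and the completion time of every machine i equals S = (Σ_j x_j)/(r_1+⋯+r_n). (The 'line-cutting' construction: arrange the jobs on a line and cut it into n consecutive pieces of lengths r_i·S.) -/
/-!
Line cutting: lay the jobs end to end on a line as the consecutive intervals
`[P j, P (j+1)]` (with `P` the partial sums of the lengths) and cut the same line into the
consecutive intervals `[C i, C (i+1)]` of lengths `r i * S`; machine `i` receives from job `j`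
the length of the overlap of the two intervals. Summing overlaps telescopes, giving the row
and column sums, and a job overlapping two pieces contains one of the `n - 1` interior cut
points `C 1, …, C (n-1)` in its interior. Distinct jobs have disjoint interiors, so they
contain distinct cut points.
-/

open Finset

section Overlap

variable {α : Type*} [AddCommGroup α] [LinearOrder α]

/-- The length of `[a, b] ∩ [c, d]`. -/
def overlap (a b c d : α) : α := max 0 (min b d - max a c)

lemma overlap_nonneg (a b c d : α) : 0 ≤ overlap a b c d := le_max_left _ _

lemma overlap_comm (a b c d : α) : overlap a b c d = overlap c d a b := by
  simp only [overlap, min_comm b d, max_comm a c]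

variable [IsOrderedAddMonoid α]

lemma overlap_eq_sub {a b c d : α} (hab : a ≤ b) (hcd : c ≤ d) :
    overlap a b c d = min b (max a d) - min b (max a c) := by
  simp only [overlap, min_def, max_def]
  split_ifs <;> simp only [sub_nonneg, not_le, sub_eq_zero, sub_self, sub_left_inj, sub_right_inj,
    eq_comm (a := (0 : α))] at * <;> order

lemma sum_overlap_eq_sub {C : ℕ → α} (hC : Monotone C) {a b : α} {n : ℕ}
    (ha : C 0 ≤ a) (hab : a ≤ b) (hb : b ≤ C n) :
    ∑ i ∈ range n, overlap a b (C i) (C (i + 1)) = b - a := by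
  rw [sum_congr rfl fun i _ => overlap_eq_sub hab (hC i.le_succ),
    sum_range_sub (fun i => min b (max a (C i))), max_eq_right (hab.trans hb),
    min_eq_left hb, max_eq_left ha, min_eq_right hab]

lemma mem_Ioo_of_overlap_pos {C : ℕ → α} (hC : Monotone C) {a b : α} {i i' : ℕ}
    (hii' : i < i')
    (h : 0 < overlap a b (C i) (C (i + 1))) (h' : 0 < overlap a b (C i') (C (i' + 1))) :
    C (i + 1) ∈ Set.Ioo a b := by
  simp only [overlap, lt_max_iff, lt_irrefl, false_or, sub_pos, lt_min_iff, max_lt_iff] at h h'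
  exact ⟨h.2.1, (hC hii').trans_lt h'.1.2⟩

end Overlap

lemma eq_of_mem_Ioo_of_monotone {α : Type*} [Preorder α] {P : ℕ → α} (hP : Monotone P)
    {j j' : ℕ} {t : α} (h : t ∈ Set.Ioo (P j) (P (j + 1)))
    (h' : t ∈ Set.Ioo (P j') (P (j' + 1))) :
    j = j' := by
  by_contra hne
  rcases Nat.lt_or_gt_of_ne hne with hlt | hlt
  · exact (h'.1.trans h.2).not_ge (hP hlt)
  · exact (h.1.trans h'.2).not_ge (hP hlt)

section PartialSums

variable {α : Type*} [AddCommMonoid α] {m : ℕ}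

/-- Terms past the end of `x` count as `0`, so `partialSums x k = ∑ j, x j` for `k ≥ m`. -/
def partialSums (x : Fin m → α) (k : ℕ) : α :=
  ∑ j ∈ range k, if h : j < m then x ⟨j, h⟩ else 0

lemma partialSums_zero (x : Fin m → α) : partialSums x 0 = 0 := sum_range_zero _

lemma partialSums_succ (x : Fin m → α) (j : Fin m) :
    partialSums x (j + 1) = partialSums x j + x j := by
  simp [partialSums, sum_range_succ]

lemma partialSums_self (x : Fin m → α) : partialSums x m = ∑ j, x j := by
  rw [partialSums, ← Fin.sum_univ_eq_sum_range (fun j => if h : j < m then x ⟨j, h⟩ else 0)]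
  simp

lemma partialSums_monotone [PartialOrder α] [IsOrderedAddMonoid α] {x : Fin m → α}
    (hx : ∀ j, 0 ≤ x j) : Monotone (partialSums x) :=
  fun _ _ hkl => sum_le_sum_of_subset_of_nonneg (range_subset_range.mpr hkl)
    fun j _ _ => by split_ifs <;> simp [hx]

end PartialSums

section LineCut

variable {α : Type*} [AddCommGroup α] [LinearOrder α] {m n : ℕ}

def lineCut (x : Fin m → α) (w : Fin n → α) (j : Fin m) (i : Fin n) : α :=
  overlap (partialSums x j) (partialSums x (j + 1)) (partialSums w i) (partialSums w (i + 1))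

lemma lineCut_nonneg (x : Fin m → α) (w : Fin n → α) (j : Fin m) (i : Fin n) :
    0 ≤ lineCut x w j i := overlap_nonneg _ _ _ _

lemma lineCut_swap (x : Fin m → α) (w : Fin n → α) (j : Fin m) (i : Fin n) :
    lineCut x w j i = lineCut w x i j := overlap_comm _ _ _ _

variable [IsOrderedAddMonoid α] {x : Fin m → α} {w : Fin n → α}

lemma sum_lineCut_right (hx : ∀ j, 0 ≤ x j) (hw : ∀ i, 0 ≤ w i)
    (hxw : ∑ j, x j = ∑ i, w i) (j : Fin m) : ∑ i, lineCut x w j i = x j := by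
  have hP := partialSums_monotone hx
  unfold lineCut
  rw [Fin.sum_univ_eq_sum_range (fun i => overlap (partialSums x j)
      (partialSums x (j + 1)) (partialSums w i) (partialSums w (i + 1))),
    sum_overlap_eq_sub (partialSums_monotone hw), partialSums_succ, add_sub_cancel_left]
  · exact partialSums_zero w ▸ partialSums_zero x ▸ hP (Nat.zero_le _)
  · exact hP j.val.le_succ
  · exact partialSums_self w ▸ hxw ▸ partialSums_self x ▸ hP j.isLt

lemma sum_lineCut_left (hx : ∀ j, 0 ≤ x j) (hw : ∀ i, 0 ≤ w i)
    (hxw : ∑ j, x j = ∑ i, w i) (i : Fin n) : ∑ j, lineCut x w j i = w i := by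
  simp only [lineCut_swap x w]
  exact sum_lineCut_right hw hx hxw.symm i

lemma card_split_lineCut_le (hx : ∀ j, 0 ≤ x j) (hw : ∀ i, 0 ≤ w i) :
    #{j | 1 < #{i | 0 < lineCut x w j i}} ≤ n - 1 := by
  have hCut : ∀ j ∈ ({j | 1 < #{i | 0 < lineCut x w j i}} : Finset (Fin m)),
      ∃ k ∈ Ioo 0 n, partialSums w k ∈ Set.Ioo (partialSums x j) (partialSums x (j + 1)) := by
    intro j hj
    obtain ⟨i, hi, i', hi', hii'⟩ := one_lt_card.mp (mem_filter.mp hj).2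
    simp only [mem_filter, mem_univ, true_and] at hi hi'
    rcases Fin.lt_or_lt_of_ne hii' with hlt | hlt
    · exact ⟨i + 1, by simp [i'.isLt.trans_le' hlt],
        mem_Ioo_of_overlap_pos (partialSums_monotone hw) hlt hi hi'⟩
    · exact ⟨i' + 1, by simp [i.isLt.trans_le' hlt],
        mem_Ioo_of_overlap_pos (partialSums_monotone hw) hlt hi' hi⟩
  calc _ ≤ #(Ioo 0 n) := card_le_card_of_forall_subsingleton _ hCut
        fun _ _ _ hj _ hj' =>
          Fin.ext (eq_of_mem_Ioo_of_monotone (partialSums_monotone hx) hj.2 hj'.2)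
    _ = n - 1 := by simp

end LineCut

theorem stmt_0_general (m n : ℕ) (hn : 0 < n)
    (x : Fin m → ℕ)
    (r : Fin n → ℕ) (hr : ∀ i, 0 < r i) :
    ∃ f : Fin m → Fin n → ℚ,
      (∀ j i, 0 ≤ f j i) ∧
      (∀ j, ∑ i, f j i = (x j : ℚ)) ∧
      (Finset.univ.filter
          (fun j => 1 < (Finset.univ.filter (fun i => 0 < f j i)).card)).card ≤ n - 1 ∧
      (∀ i, (∑ j, f j i) / (r i : ℚ) =
        (∑ j, (x j : ℚ)) / ((∑ i, r i : ℕ) : ℚ)) := by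
  set S : ℚ := (∑ j, (x j : ℚ)) / ((∑ i, r i : ℕ) : ℚ)
  have hA : ((∑ i, r i : ℕ) : ℚ) ≠ 0 := Nat.cast_ne_zero.mpr
    (sum_pos (fun i _ => hr i) (univ_nonempty_iff.mpr (Fin.pos_iff_nonempty.mp hn))).ne'
  have hx₀ : ∀ j, (0 : ℚ) ≤ x j := fun j => Nat.cast_nonneg _
  have hw₀ : ∀ i, (0 : ℚ) ≤ r i * S := fun i => by positivity
  have hxw : ∑ j, (x j : ℚ) = ∑ i, (r i : ℚ) * S := by
    rw [← sum_mul, ← Nat.cast_sum univ r, mul_div_cancel₀ _ hA]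
  refine ⟨lineCut (fun j => (x j : ℚ)) (fun i => r i * S), lineCut_nonneg _ _,
    sum_lineCut_right hx₀ hw₀ hxw, card_split_lineCut_le hx₀ hw₀, fun i => ?_⟩
  rw [sum_lineCut_left hx₀ hw₀ hxw, mul_div_cancel_left₀ _ (Nat.cast_ne_zero.mpr (hr i).ne')]

/-- For every list of `m` jobs with positive integer lengths and every `n ≥ 1`
machines with positive integer speeds, there exists a fractional allocation in which at most
`n - 1` jobs are split and every machine's completion time equals the perfect completion time
`S = (∑ j, x j) / (∑ i, r i)`. -/
theorem stmt_0 (m n : ℕ) (hn : 0 < n)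
    (x : Fin m → ℕ) (hx : ∀ j, 0 < x j)
    (r : Fin n → ℕ) (hr : ∀ i, 0 < r i) :
    ∃ f : Fin m → Fin n → ℚ,
      (∀ j i, 0 ≤ f j i) ∧
      (∀ j, ∑ i, f j i = (x j : ℚ)) ∧
      (Finset.univ.filter
          (fun j => 1 < (Finset.univ.filter (fun i => 0 < f j i)).card)).card ≤ n - 1 ∧
      (∀ i, (∑ j, f j i) / (r i : ℚ) =
        (∑ j, (x j : ℚ)) / ((∑ i, r i : ℕ) : ℚ)) :=
  stmt_0_general m n hn x r hr
end

section
/- In every fractional allocation of the jobs among the n machines, there exists at least one machine i whose completion time satisfies b_i ≤ (2 − 1/r_i)·S. (Otherwise the total allocated length would exceed Σ_i r_i(2 − 1/r_i)S = Σ_i (2r_i − 1)S ≥ A·S, a contradiction.) -/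
/-!
Machine `i` can only finish later than `(2 - 1/rᵢ) S` if it carries more than `(2rᵢ - 1) S`.
Since every speed is at least `1`, these thresholds add up to `(2A - n) S ≥ A S`, which is the
total length of the jobs, so not every machine can exceed its threshold.
-/

open Finset

section Pigeonhole

variable {ι K : Type*} [Fintype ι]
  [CommRing K] [LinearOrder K] [IsStrictOrderedRing K]

lemma sum_mul_le_sum_two_mul_sub_one_mul {r : ι → K} (hr : ∀ i, 1 ≤ r i) {S : K} (hS : 0 ≤ S) :
    (∑ i, r i) * S ≤ ∑ i, (2 * r i - 1) * S := by
  rw [← sum_mul]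
  gcongr with i
  linarith [hr i]

lemma exists_le_two_mul_sub_one_mul_of_sum_eq [Nonempty ι] {L r : ι → K}
    (hr : ∀ i, 1 ≤ r i) {S : K} (hS : 0 ≤ S) (hL : ∑ i, L i = (∑ i, r i) * S) :
    ∃ i, L i ≤ (2 * r i - 1) * S := by
  obtain ⟨i, -, hi⟩ := exists_le_of_sum_le univ_nonempty
    (hL.trans_le (sum_mul_le_sum_two_mul_sub_one_mul hr hS))
  exact ⟨i, hi⟩

end Pigeonhole

lemma div_le_two_sub_one_div_mul_iff {K : Type*} [Field K] [LinearOrder K]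
    [IsStrictOrderedRing K] {L r S : K} (hr : 0 < r) :
    L / r ≤ (2 - 1 / r) * S ↔ L ≤ (2 * r - 1) * S := by
  rw [div_le_iff₀ hr]
  field_simp

theorem stmt_1_general (m n : ℕ) (hn : 0 < n)
    (x : Fin m → ℕ)
    (r : Fin n → ℕ) (hr : ∀ i, 0 < r i)
    (f : Fin m → Fin n → ℚ)
    (hfsum : ∀ j, ∑ i, f j i = (x j : ℚ)) :
    ∃ i : Fin n,
      (∑ j, f j i) / (r i : ℚ) ≤
        (2 - 1 / (r i : ℚ)) * ((∑ j, (x j : ℚ)) / ((∑ i, r i : ℕ) : ℚ)) := by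
  have : Nonempty (Fin n) := ⟨⟨0, hn⟩⟩
  have hA : (0 : ℚ) < ((∑ i, r i : ℕ) : ℚ) := by
    exact_mod_cast sum_pos (fun i _ => hr i) univ_nonempty
  have hload : ∑ i, ∑ j, f j i
      = (∑ i, (r i : ℚ)) * ((∑ j, (x j : ℚ)) / ((∑ i, r i : ℕ) : ℚ)) := by
    rw [sum_comm, ← Nat.cast_sum, mul_div_cancel₀ _ hA.ne']
    exact sum_congr rfl fun j _ => hfsum j
  obtain ⟨i, hi⟩ := exists_le_two_mul_sub_one_mul_of_sum_eq
    (fun i => Nat.one_le_cast.mpr (hr i)) (by positivity) hload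
  exact ⟨i, (div_le_two_sub_one_div_mul_iff (Nat.cast_pos.mpr (hr i))).mpr hi⟩

/-- In every fractional allocation of the jobs among the `n` machines there is a
machine `i` with completion time at most `(2 - 1/r i) * S`. -/
theorem stmt_1 (m n : ℕ) (hn : 0 < n)
    (x : Fin m → ℕ) (hx : ∀ j, 0 < x j)
    (r : Fin n → ℕ) (hr : ∀ i, 0 < r i)
    (f : Fin m → Fin n → ℚ) (hf0 : ∀ j i, 0 ≤ f j i)
    (hfsum : ∀ j, ∑ i, f j i = (x j : ℚ)) :
    ∃ i : Fin n,
      (∑ j, f j i) / (r i : ℚ) ≤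
        (2 - 1 / (r i : ℚ)) * ((∑ j, (x j : ℚ)) / ((∑ i, r i : ℕ) : ℚ)) :=
  stmt_1_general m n hn x r hr f hfsum
end

section
/- Let t ≥ 1 be a rational number. There exists an integral partition of all m jobs among the n machines with makespan at most (1+t)·S if and only if there exists an integral partition of only the jobs of length at least S among the n machines with makespan at most (1+t)·S. (For the nontrivial direction: given such a partition of the long jobs, the jobs of length less than S can be added one by one, always to a machine with completion time at most (2 − 1/r_i)·S, keeping the makespan at most 2S ≤ (1+t)S.) -/
/-!
Short jobs can be added greedily. The total length of all jobs is `(∑ i, r i) * S`, so under any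
assignment some machine `i` carries load at most `r i * S`; placing a job of length at most `S`
there gives load at most `(r i + 1) * S ≤ 2 * r i * S ≤ (1 + t) * r i * S`.
-/

open Finset

namespace Scheduling

variable {ι κ K : Type*} [DecidableEq κ]

section Load

variable [AddCommMonoid K]

def load (x : ι → K) (P : ι → κ) (s : Finset ι) (i : κ) : K :=
  ∑ j ∈ s with P j = i, x j

theorem load_mono [PartialOrder K] [IsOrderedAddMonoid K] {x : ι → K} (hx : ∀ j, 0 ≤ x j)
    (P : ι → κ) {s s' : Finset ι} (h : s ⊆ s') (i : κ) : load x P s i ≤ load x P s' i :=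
  sum_le_sum_of_subset_of_nonneg (filter_subset_filter _ h) fun j _ _ => hx j

theorem sum_load [Fintype κ] (x : ι → K) (P : ι → κ) (s : Finset ι) :
    ∑ i, load x P s i = ∑ j ∈ s, x j :=
  sum_fiberwise s P x

theorem load_update_insert [DecidableEq ι] (x : ι → K) (P : ι → κ) {a : ι} {s : Finset ι}
    (ha : a ∉ s) (k i : κ) :
    load x (Function.update P a k) (insert a s) i = load x P s i + if k = i then x a else 0 := by
  simp only [load, sum_filter, sum_insert ha, Function.update_self]
  rw [add_comm]
  congr 1
  refine sum_congr rfl fun j hj => ?_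
  rw [Function.update_of_ne (ne_of_mem_of_not_mem hj ha)]

end Load

variable [CommRing K] [LinearOrder K] [IsStrictOrderedRing K]

def Schedulable (x : ι → K) (r : κ → K) (s : Finset ι) (T : K) : Prop :=
  ∃ P : ι → κ, ∀ i, load x P s i ≤ T * r i

theorem Schedulable.mono {x : ι → K} {r : κ → K} {s s' : Finset ι} {T : K} (hx : ∀ j, 0 ≤ x j)
    (h : s ⊆ s') : Schedulable x r s' T → Schedulable x r s T := fun ⟨P, hP⟩ =>
  ⟨P, fun i => (load_mono hx P h i).trans (hP i)⟩

theorem exists_load_le [Fintype κ] [Nonempty κ] {x : ι → K} {r : κ → K} {S : K} (P : ι → κ)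
    {s : Finset ι} (hs : ∑ j ∈ s, x j ≤ (∑ i, r i) * S) : ∃ i, load x P s i ≤ r i * S := by
  rw [← sum_load x P, sum_mul] at hs
  obtain ⟨i, -, hi⟩ := exists_le_of_sum_le univ_nonempty hs
  exact ⟨i, hi⟩

section Greedy

variable [Fintype ι] [DecidableEq ι] [Fintype κ] {x : ι → K} {r : κ → K} {S T : K}
  (hx : ∀ j, 0 ≤ x j) (hr : ∀ i, 1 ≤ r i) (hS : 0 ≤ S) (hT : 2 * S ≤ T)
  (htot : ∑ j, x j ≤ (∑ i, r i) * S)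
include hx hr hS hT htot

theorem Schedulable.insert {s : Finset ι} {a : ι} (ha : x a ≤ S) (h : Schedulable x r s T) :
    Schedulable x r (insert a s) T := by
  obtain ⟨P, hP⟩ := h
  by_cases has : a ∈ s
  · exact ⟨P, by rwa [Finset.insert_eq_of_mem has]⟩
  have : Nonempty κ := ⟨P a⟩
  obtain ⟨k, hk⟩ := exists_load_le P ((sum_le_univ_sum_of_nonneg hx).trans htot)
  refine ⟨Function.update P a k, fun i => ?_⟩
  rw [load_update_insert x P has]
  split_ifs with hki
  · subst hki
    calc load x P s k + x a ≤ r k * S + S := add_le_add hk ha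
      _ ≤ T * r k := by nlinarith [hr k]
  · simpa using hP i

theorem Schedulable.union {s U : Finset ι} (hU : ∀ j ∈ U, x j ≤ S) (h : Schedulable x r s T) :
    Schedulable x r (s ∪ U) T := by
  induction U using Finset.induction with
  | empty => simpa using h
  | insert a U _ ih =>
    rw [union_insert]
    exact (ih fun j hj => hU j (mem_insert_of_mem hj)).insert hx hr hS hT htot
      (hU a (mem_insert_self a U))

end Greedy

end Scheduling

open Scheduling

theorem stmt_2_general (m n : ℕ) (hn : 0 < n)
    (x : Fin m → ℕ)
    (r : Fin n → ℕ) (hr : ∀ i, 0 < r i)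
    (S : ℚ) (hS : S = (∑ j, (x j : ℚ)) / ((∑ i, r i : ℕ) : ℚ))
    (t : ℚ) (ht : 1 ≤ t) :
    (∃ P : Fin m → Fin n, ∀ i,
        (∑ j ∈ Finset.univ.filter (fun j => P j = i), (x j : ℚ)) / (r i : ℚ)
          ≤ (1 + t) * S) ↔
    (∃ P : Fin m → Fin n, ∀ i,
        (∑ j ∈ Finset.univ.filter (fun j => S ≤ (x j : ℚ) ∧ P j = i), (x j : ℚ)) / (r i : ℚ)
          ≤ (1 + t) * S) := by
  have hr₀ : ∀ i, (0 : ℚ) < r i := fun i => mod_cast hr i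
  have hA : (0 : ℚ) < ∑ i, (r i : ℚ) :=
    sum_pos (fun i _ => hr₀ i) (univ_nonempty_iff.mpr (Fin.pos_iff_nonempty.mp hn))
  push_cast at hS
  have hS₀ : 0 ≤ S := hS ▸ by positivity
  have htot : ∑ j, (x j : ℚ) ≤ (∑ i, (r i : ℚ)) * S := by rw [hS, mul_div_cancel₀ _ hA.ne']
  have hT : 2 * S ≤ (1 + t) * S := by nlinarith
  have hsched : ∀ s : Finset (Fin m),
      (∃ P : Fin m → Fin n, ∀ i, (∑ j ∈ s with P j = i, (x j : ℚ)) / r i ≤ (1 + t) * S) ↔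
        Schedulable (fun j => (x j : ℚ)) (fun i => (r i : ℚ)) s ((1 + t) * S) :=
    fun s => exists_congr fun P => forall_congr' fun i => div_le_iff₀ (hr₀ i)
  have hlong := hsched {j | S ≤ (x j : ℚ)}
  simp only [filter_filter] at hlong
  rw [hsched univ, hlong]
  have hx : ∀ j, (0 : ℚ) ≤ x j := fun j => Nat.cast_nonneg _
  refine ⟨Schedulable.mono hx (filter_subset _ _), fun h => ?_⟩
  have hshort : ∀ j ∈ ({j | ¬S ≤ (x j : ℚ)} : Finset (Fin m)), (x j : ℚ) ≤ S := fun j hj =>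
    (not_le.mp (mem_filter.mp hj).2).le
  simpa only [filter_union_filter_not_eq] using
    h.union hx (fun i => mod_cast hr i) hS₀ hT htot hshort

/-- For rational `t ≥ 1`, there is an integral partition of all jobs with makespan
at most `(1+t)·S` iff there is an integral partition of only the jobs of length at least `S`
with makespan at most `(1+t)·S`. -/
theorem stmt_2 (m n : ℕ) (hn : 0 < n)
    (x : Fin m → ℕ) (hx : ∀ j, 0 < x j)
    (r : Fin n → ℕ) (hr : ∀ i, 0 < r i)
    (S : ℚ) (hS : S = (∑ j, (x j : ℚ)) / ((∑ i, r i : ℕ) : ℚ))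
    (t : ℚ) (ht : 1 ≤ t) :
    (∃ P : Fin m → Fin n, ∀ i,
        (∑ j ∈ Finset.univ.filter (fun j => P j = i), (x j : ℚ)) / (r i : ℚ)
          ≤ (1 + t) * S) ↔
    (∃ P : Fin m → Fin n, ∀ i,
        (∑ j ∈ Finset.univ.filter (fun j => S ≤ (x j : ℚ) ∧ P j = i), (x j : ℚ)) / (r i : ℚ)
          ≤ (1 + t) * S) :=
  stmt_2_general m n hn x r hr S hS t ht
end

section
/- Reduction correctness for NP-hardness of the interval problem. Fix an integer n ≥ 3 and a rational 0 < d < n−2. Let X₁ be a list of 2m′ positive integers, let M be the rational number such that the sum of X₁ equals 2n(1 − d/(n−2))·M, assume n·M is a positive integer and every element of X₁ is at most n(1 − d/(n−2))·M. Let X₂ be obtained from X₁ by replacing each element x by nM − x, and let X₃ consist of X₂ together with (n−2)(m′−1) additional jobs of length nM. Let S = (Σ_{x∈X₃} x)/n. Then X₁ can be partitioned into two subsets with equal sum and equal cardinality if and only if X₃ admits an integral partition among n identical machines (r_i = 1 for all i) with makespan at most S + d·M. -/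
/-
Write K = nM and C = dK/(n-2). The jobs of X₃ have total length 2m'K - 2(K - C), the bound
S + dM equals (m'-1)K + C, and a machine holding c jobs whose X₁-parts sum to σ has load cK - σ.
Given a balanced split of X₁, put each half on a machine of its own (load m'K - (K - C)) and m'-1
jobs of length K on each of the other n-2 machines. Conversely, σ ≤ 2(K - C) and C > 0 force
every machine to hold at most m' jobs; as there are nm' - (n-2) jobs, two machines hold exactly
m', and on each of them σ ≥ K - C. These two machines exhaust the total 2(K - C), so all of X₁
lies on them, m' jobs on each, with equal sums.
-/

/-- The job lengths of the instance `X₃`: the inverted jobs `nM - x` (encoded with `K = nM`)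
together with `(n-2)*(m'-1)` jobs of length `K`. -/
def x3jobs (m' K : ℕ) (x1 : Fin (2 * m') → ℕ) (n : ℕ) :
    (Fin (2 * m') ⊕ Fin ((n - 2) * (m' - 1))) → ℕ :=
  Sum.elim (fun j => K - x1 j) (fun _ => K)

open Finset Fintype

theorem card_filter_fst_finProdFinEquiv_symm_eq {p q : ℕ} (k : Fin p) :
    #{r : Fin (p * q) | (finProdFinEquiv.symm r).1 = k} = q := by
  rw [card_filter, ← finProdFinEquiv.sum_comp, Fintype.sum_prod_type]
  simp

theorem card_filter_comp_eq_le {β γ μ : Type*} [Fintype β] [DecidableEq γ] [DecidableEq μ]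
    {q : ℕ} {e : γ → μ} (he : e.Injective) {h : β → γ} (hh : ∀ k, #{b | h b = k} ≤ q) (i : μ) :
    #{b | e (h b) = i} ≤ q := by
  by_cases hi : ∃ k, e k = i
  · obtain ⟨k, rfl⟩ := hi
    simpa only [he.eq_iff] using hh k
  · push Not at hi
    simp [hi]

theorem exists_fin_map_two_le_card_fiber_le {n : ℕ} (q : ℕ) (hn : 2 ≤ n) :
    ∃ g : Fin ((n - 2) * q) → Fin n, (∀ r, 2 ≤ (g r : ℕ)) ∧ ∀ i, #{r | g r = i} ≤ q := by
  let e : Fin (n - 2) → Fin n := fun k => ⟨k + 2, by omega⟩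
  have he : e.Injective := fun k l hkl => Fin.ext (by simpa [e] using hkl)
  exact ⟨fun r => e (finProdFinEquiv.symm r).1, fun r => by simp [e],
    card_filter_comp_eq_le he fun k => (card_filter_fst_finProdFinEquiv_symm_eq k).le⟩

theorem two_le_card_filter_eq_of_forall_le {μ : Type*} [Fintype μ] {c : μ → ℕ} {m : ℕ}
    (hc : ∀ i, c i ≤ m) (h : card μ * m + 2 ≤ ∑ i, c i + card μ) : 1 < #{i | c i = m} := by
  have key : ∑ i, (c i + 1) ≤ ∑ i, (m + if c i = m then 1 else 0) :=
    sum_le_sum fun i _ => by have := hc i; split_ifs <;> omega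
  rw [sum_add_distrib, sum_add_distrib, ← card_filter] at key
  simp only [sum_const, card_univ, smul_eq_mul] at key
  omega

section Reduction

variable {α β μ 𝕜 : Type*} [Fintype α] [Fintype β] [DecidableEq μ] [CommRing 𝕜]

def invertedJobs (K : 𝕜) (x : α → 𝕜) : α ⊕ β → 𝕜 :=
  Sum.elim (fun a => K - x a) fun _ => K

theorem sum_invertedJobs (K : 𝕜) (x : α → 𝕜) :
    ∑ j, invertedJobs (β := β) K x j = (card α + card β) * K - ∑ a, x a := by
  simp only [invertedJobs, Fintype.sum_sum_type, Sum.elim_inl, Sum.elim_inr, sum_sub_distrib,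
    sum_const, card_univ, nsmul_eq_mul]
  ring

theorem sum_invertedJobs_fiber (K : 𝕜) (x : α → 𝕜) (f : α → μ) (g : β → μ) (i : μ) :
    ∑ j with Sum.elim f g j = i, invertedJobs K x j =
      (#{a | f a = i} + #{b | g b = i}) * K - ∑ a with f a = i, x a := by
  rw [sum_filter, Fintype.sum_sum_type, card_filter, card_filter, sum_filter]
  push_cast
  simp only [add_mul, sum_mul, invertedJobs, Sum.elim_inl, Sum.elim_inr]
  rw [add_sub_right_comm, ← sum_sub_distrib]
  congr 1 <;> exact sum_congr rfl fun _ _ => by split_ifs with h <;> simp [h]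

theorem filter_eq_eq_compl_of_forall_eq_or_eq [DecidableEq α] {f : α → μ} {i₁ i₂ : μ}
    (hne : i₁ ≠ i₂) (hf : ∀ a, f a = i₁ ∨ f a = i₂) :
    univ.filter (fun a => f a = i₂) = (univ.filter fun a => f a = i₁)ᶜ := by
  ext a
  rcases hf a with h | h <;> simp [h, hne, hne.symm]

variable [LinearOrder 𝕜] [IsStrictOrderedRing 𝕜]

theorem natCast_le_of_load_le {m k : ℕ} {K C σ : 𝕜} (hK : 0 ≤ K) (hC : 0 < C)
    (hσ : σ ≤ 2 * (K - C)) (h : k * K - σ ≤ (m - 1) * K + C) : k ≤ m := by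
  by_contra! hk
  have : ((m + 1 : ℕ) : 𝕜) * K ≤ k * K := by gcongr; exact hk
  push_cast at this
  linarith

theorem pair_eq_and_eq_zero_of_sum_le_two_mul [Fintype μ] {f : μ → 𝕜} (hf : ∀ i, 0 ≤ f i)
    {b : 𝕜} (hsum : ∑ i, f i ≤ 2 * b) {i₁ i₂ : μ} (hne : i₁ ≠ i₂) (h₁ : b ≤ f i₁)
    (h₂ : b ≤ f i₂) : f i₁ = b ∧ f i₂ = b ∧ ∀ i, i ≠ i₁ → i ≠ i₂ → f i = 0 := by
  have hpair : f i₁ + f i₂ ≤ ∑ i, f i := by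
    simpa [sum_pair hne] using sum_le_univ_sum_of_nonneg (s := {i₁, i₂}) hf
  refine ⟨by linarith, by linarith, fun i hi₁ hi₂ => le_antisymm ?_ (hf i)⟩
  have := sum_le_univ_sum_of_nonneg (s := {i, i₁, i₂}) hf
  rw [sum_insert (by simp [hi₁, hi₂]), sum_pair hne] at this
  linarith

theorem sum_eq_of_sum_eq_sum_compl [DecidableEq α] {x : α → 𝕜} {B : 𝕜}
    (hx : ∑ a, x a = 2 * B) {T : Finset α} (hT : ∑ a ∈ T, x a = ∑ a ∈ Tᶜ, x a) :
    ∑ a ∈ T, x a = B ∧ ∑ a ∈ Tᶜ, x a = B := by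
  have := sum_add_sum_compl T x
  constructor <;> linarith

theorem load_le_of_balanced [DecidableEq α] {m : ℕ} (hα : card α = 2 * m) {K C : 𝕜}
    (hK : 0 ≤ K) (hC : 0 ≤ C) {x : α → 𝕜} (hx : ∑ a, x a = 2 * (K - C))
    {T : Finset α} (hT : #T = m) (hTx : ∑ a ∈ T, x a = ∑ a ∈ Tᶜ, x a)
    {i₀ i₁ : μ} (hi : i₀ ≠ i₁) {g : β → μ} (hg₀ : ∀ b, g b ≠ i₀) (hg₁ : ∀ b, g b ≠ i₁)
    (hg : ∀ i, #{b | g b = i} + 1 ≤ m) (i : μ) :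
    ∑ j with Sum.elim (fun a => if a ∈ T then i₀ else i₁) g j = i, invertedJobs K x j ≤
      (m - 1) * K + C := by
  obtain ⟨hxT, hxTc⟩ := sum_eq_of_sum_eq_sum_compl hx hTx
  have hTc : #Tᶜ = m := by rw [card_compl, hα, hT]; omega
  rw [sum_invertedJobs_fiber]
  by_cases h₀ : i = i₀
  · subst h₀
    have hS : ({a | (if a ∈ T then i else i₁) = i} : Finset α) = T := by ext; simp [hi.symm]
    rw [hS, filter_false_of_mem fun b _ => hg₀ b, Finset.card_empty, Nat.cast_zero, add_zero, hT,
      hxT]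
    linarith
  by_cases h₁ : i = i₁
  · subst h₁
    have hS : ({a | (if a ∈ T then i₀ else i) = i} : Finset α) = Tᶜ := by ext; simp [hi]
    rw [hS, filter_false_of_mem fun b _ => hg₁ b, Finset.card_empty, Nat.cast_zero, add_zero,
      hTc, hxTc]
    linarith
  have hS : ({a | (if a ∈ T then i₀ else i₁) = i} : Finset α) = ∅ :=
    filter_false_of_mem fun a _ => by split_ifs <;> simp [Ne.symm h₀, Ne.symm h₁]
  have hgi : ((#{b | g b = i} : ℕ) : 𝕜) ≤ m - 1 := by
    rw [le_sub_iff_add_le]; exact_mod_cast hg i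
  rw [hS, Finset.card_empty, Finset.sum_empty, Nat.cast_zero, zero_add, sub_zero]
  nlinarith

theorem exists_balanced_of_load_le [Fintype μ] [DecidableEq α] {m : ℕ} (hα : card α = 2 * m)
    (hcard : card μ * m + 2 ≤ card α + card β + card μ) {K C : 𝕜} (hK : 0 ≤ K) (hC : 0 < C)
    {x : α → 𝕜} (hx : ∀ a, 0 < x a) (hxsum : ∑ a, x a = 2 * (K - C)) (P : α ⊕ β → μ)
    (hP : ∀ i, ∑ j with P j = i, invertedJobs K x j ≤ (m - 1) * K + C) :
    ∃ T : Finset α, #T = m ∧ ∑ a ∈ T, x a = ∑ a ∈ Tᶜ, x a := by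
  set S : μ → Finset α := fun i => {a | P (.inl a) = i}
  set c : μ → ℕ := fun i => #(S i) + #{b | P (.inr b) = i}
  set σ : μ → 𝕜 := fun i => ∑ a ∈ S i, x a
  have hload (i : μ) : c i * K - σ i ≤ (m - 1) * K + C := by
    have := hP i
    rw [← Sum.elim_comp_inl_inr P, sum_invertedJobs_fiber] at this
    simpa only [c, σ, S, Nat.cast_add, Function.comp_apply] using this
  have hσ_nonneg (i : μ) : 0 ≤ σ i := sum_nonneg fun a _ => (hx a).le
  have hσ_sum : ∑ i, σ i = 2 * (K - C) := by rw [Finset.sum_fiberwise, hxsum]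
  have hc_le (i : μ) : c i ≤ m := by
    refine natCast_le_of_load_le hK hC ?_ (by exact_mod_cast hload i)
    exact hσ_sum ▸ single_le_sum (fun i _ => hσ_nonneg i) (mem_univ i)
  have hc_sum : ∑ i, c i = card α + card β := by
    simp only [c, S, sum_add_distrib]
    rw [← card_eq_sum_card_fiberwise fun _ _ => mem_univ _,
      ← card_eq_sum_card_fiberwise fun _ _ => mem_univ _, card_univ, card_univ]
  obtain ⟨i₁, hi₁, i₂, hi₂, hne⟩ :=
    one_lt_card.1 (two_le_card_filter_eq_of_forall_le hc_le (hc_sum ▸ hcard))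
  have hfull {i : μ} (hi : i ∈ ({i | c i = m} : Finset μ)) : K - C ≤ σ i := by
    have := hload i
    rw [(mem_filter.1 hi).2] at this
    linarith
  obtain ⟨hσ₁, hσ₂, hσ_zero⟩ :=
    pair_eq_and_eq_zero_of_sum_le_two_mul hσ_nonneg hσ_sum.le hne (hfull hi₁) (hfull hi₂)
  have hsmall (a : α) : P (.inl a) = i₁ ∨ P (.inl a) = i₂ := by
    by_contra! h
    have : x a ≤ σ (P (.inl a)) := single_le_sum (fun a _ => (hx a).le) (by simp [S])
    linarith [hσ_zero _ h.1 h.2, hx a]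
  have hS₂ : S i₂ = (S i₁)ᶜ := filter_eq_eq_compl_of_forall_eq_or_eq hne hsmall
  refine ⟨S i₁, ?_, by rw [← hS₂]; exact hσ₁.trans hσ₂.symm⟩
  have h₁ := hc_le i₁
  have h₂ := hc_le i₂
  have := card_compl (S i₁)
  simp only [c, hS₂] at h₁ h₂
  omega

end Reduction

theorem natCast_x3jobs {R : Type*} [CommRing R] {m' K n : ℕ} {x1 : Fin (2 * m') → ℕ}
    (hx : ∀ j, x1 j ≤ K) (j : Fin (2 * m') ⊕ Fin ((n - 2) * (m' - 1))) :
    (x3jobs m' K x1 n j : R) = invertedJobs (K : R) (fun a => (x1 a : R)) j := by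
  cases j <;> simp [x3jobs, invertedJobs, Nat.cast_sub (hx _)]

theorem two_mul_add_sub_two_mul_sub_one_add {n m : ℕ} (hn : 2 ≤ n) (hm : 1 ≤ m) :
    2 * m + (n - 2) * (m - 1) + n = n * m + 2 := by
  obtain ⟨p, rfl⟩ : ∃ p, n = p + 2 := ⟨n - 2, by omega⟩
  obtain ⟨q, rfl⟩ : ∃ q, m = q + 1 := ⟨m - 1, by omega⟩
  simp only [Nat.add_sub_cancel]
  ring

theorem x3_deadline_eq {n m' K : ℕ} (hn : 3 ≤ n) (hm' : 1 ≤ m') {d M : ℚ}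
    (hKM : (K : ℚ) = n * M) :
    (((2 * m' + (n - 2) * (m' - 1) : ℕ) : ℚ) * K - 2 * (K - K * d / (n - 2))) / n + d * M =
      (m' - 1) * K + K * d / (n - 2) := by
  have hn2 : (n : ℚ) - 2 ≠ 0 := by
    have : (3 : ℚ) ≤ n := by exact_mod_cast hn
    linarith
  have hn0 : (n : ℚ) ≠ 0 := by positivity
  have hM : M = K / n := by rw [hKM]; field_simp
  rw [hM]
  push_cast [Nat.cast_sub (by omega : 2 ≤ n), Nat.cast_sub hm']
  field_simp
  ring

theorem stmt_8_general (n : ℕ) (hn : 3 ≤ n)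
    (d : ℚ) (hd0 : 0 < d)
    (m' : ℕ) (hm' : 1 ≤ m')
    (x1 : Fin (2 * m') → ℕ) (hx1 : ∀ j, 0 < x1 j)
    (M : ℚ) (hsum : (∑ j, (x1 j : ℚ)) = 2 * (n : ℚ) * (1 - d / ((n : ℚ) - 2)) * M)
    (K : ℕ) (hK : 0 < K) (hKM : (K : ℚ) = (n : ℚ) * M)
    (hbound : ∀ j, (x1 j : ℚ) ≤ (n : ℚ) * (1 - d / ((n : ℚ) - 2)) * M) :
    (∃ T : Finset (Fin (2 * m')), T.card = m' ∧ ∑ j ∈ T, x1 j = ∑ j ∈ Tᶜ, x1 j) ↔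
    (∃ P : (Fin (2 * m') ⊕ Fin ((n - 2) * (m' - 1))) → Fin n,
      ∀ i : Fin n,
        (∑ j ∈ Finset.univ.filter (fun j => P j = i), (x3jobs m' K x1 n j : ℚ))
          ≤ (∑ j : Fin (2 * m') ⊕ Fin ((n - 2) * (m' - 1)), (x3jobs m' K x1 n j : ℚ)) / (n : ℚ)
            + d * M) := by
  have hn2 : (0 : ℚ) < n - 2 := by
    have : (3 : ℚ) ≤ n := by exact_mod_cast hn
    linarith
  have hC : 0 < (K : ℚ) * d / (n - 2) := by positivity
  have hB : (n : ℚ) * (1 - d / (n - 2)) * M = K - K * d / (n - 2) := by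
    rw [hKM]; field_simp
  rw [hB] at hbound
  replace hsum : ∑ j, (x1 j : ℚ) = 2 * (K - K * d / (n - 2)) := by rw [hsum, ← hB]; ring
  have hxK (j) : x1 j ≤ K := by
    have : (K : ℚ) - K * d / (n - 2) ≤ K := by linarith
    exact_mod_cast (hbound j).trans this
  simp only [natCast_x3jobs hxK, sum_invertedJobs, Fintype.card_fin, hsum, ← Nat.cast_add,
    x3_deadline_eq hn hm' hKM]
  constructor
  · rintro ⟨T, hT, hTx⟩
    obtain ⟨g, hg₂, hg⟩ := exists_fin_map_two_le_card_fiber_le (m' - 1) (by omega : 2 ≤ n)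
    exact ⟨_, load_le_of_balanced (by simp) (by positivity) hC.le hsum hT (by exact_mod_cast hTx)
      (i₀ := ⟨0, by omega⟩) (i₁ := ⟨1, by omega⟩) (g := g) (by simp [Fin.ext_iff])
      (fun r h => absurd (hg₂ r) (by simp [h])) (fun r h => absurd (hg₂ r) (by simp [h]))
      fun i => by have := hg i; omega⟩
  · rintro ⟨P, hP⟩
    obtain ⟨T, hT, hTx⟩ := exists_balanced_of_load_le (by simp)
      (by simpa using (two_mul_add_sub_two_mul_sub_one_add (by omega) hm').ge) (by positivity)
      hC (fun a => by exact_mod_cast hx1 a) hsum P hP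
    exact ⟨T, hT, by exact_mod_cast hTx⟩

/-- reduction correctness for NP-hardness of the interval problem:
`X₁` has an equal-sum equal-cardinality partition iff `X₃` admits an integral partition among
`n` identical machines with makespan at most `S + d·M`. -/
theorem stmt_8 (n : ℕ) (hn : 3 ≤ n)
    (d : ℚ) (hd0 : 0 < d) (hd : d < (n : ℚ) - 2)
    (m' : ℕ) (hm' : 1 ≤ m')
    (x1 : Fin (2 * m') → ℕ) (hx1 : ∀ j, 0 < x1 j)
    (M : ℚ) (hsum : (∑ j, (x1 j : ℚ)) = 2 * (n : ℚ) * (1 - d / ((n : ℚ) - 2)) * M)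
    (K : ℕ) (hK : 0 < K) (hKM : (K : ℚ) = (n : ℚ) * M)
    (hbound : ∀ j, (x1 j : ℚ) ≤ (n : ℚ) * (1 - d / ((n : ℚ) - 2)) * M) :
    (∃ T : Finset (Fin (2 * m')), T.card = m' ∧ ∑ j ∈ T, x1 j = ∑ j ∈ Tᶜ, x1 j) ↔
    (∃ P : (Fin (2 * m') ⊕ Fin ((n - 2) * (m' - 1))) → Fin n,
      ∀ i : Fin n,
        (∑ j ∈ Finset.univ.filter (fun j => P j = i), (x3jobs m' K x1 n j : ℚ))
          ≤ (∑ j : Fin (2 * m') ⊕ Fin ((n - 2) * (m' - 1)), (x3jobs m' K x1 n j : ℚ)) / (n : ℚ)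
            + d * M) :=
  stmt_8_general n hn d hd0 m' hm' x1 hx1 M hsum K hK hKM hbound
end

section
/- For every fractional allocation f whose set of split jobs has cardinality s and whose completion times are b_1,…,b_n, there exists a fractional allocation f′ with the same completion times b_1,…,b_n in which at most s jobs are split and every split job of f′ has length at least the length of every non-split job of f′ (i.e., only the s longest jobs are split). -/
/-!
Record an allocation as a matrix `f j i ≥ 0`: row sums are job lengths, column sums machine
loads. If a split job `j` is shorter than an unsplit job `j'`, then `j'` sits on a single machine
`i₀`; exchange the two: `j` moves entirely onto `i₀`, and `j'` takes over `j`'s fractional pattern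
plus the excess `x j' - x j` on `i₀`. Row and column sums and the number of split jobs are kept,
while the total length of the split jobs strictly grows. Among the finitely many split sets
reachable this way, one of maximal total length therefore consists of longest jobs.
-/

open Finset Function

theorem Finset.sum_update_update_of_add_eq {ι M : Type*} [Fintype ι] [DecidableEq ι]
    [AddCommMonoid M] (F : ι → M) {j j' : ι} (hne : j ≠ j') {a a' : M}
    (h : a + a' = F j + F j') :
    ∑ k, update (update F j a) j' a' k = ∑ k, F k := by
  have hj : j ∈ (univ : Finset ι) \ {j'} := by simp [hne]
  rw [sum_update_of_mem (mem_univ j'), sum_update_of_mem hj,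
    sum_eq_add_sum_sdiff_singleton_of_mem (mem_univ j') F,
    sum_eq_add_sum_sdiff_singleton_of_mem hj F, add_left_comm, ← add_assoc, h, add_comm (F j),
    add_assoc]

section

variable {ι κ K : Type*} [Fintype ι] [Fintype κ] [Zero K] [LinearOrder K]

def splitJobs (f : ι → κ → K) : Finset ι := {j | 1 < #{i | 0 < f j i}}

@[simp]
lemma mem_splitJobs {f : ι → κ → K} {j : ι} : j ∈ splitJobs f ↔ 1 < #{i | 0 < f j i} := by
  simp [splitJobs]

lemma card_filter_pos_mono {v w : κ → K} (h : v ≤ w) : #{i | 0 < v i} ≤ #{i | 0 < w i} :=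
  card_le_card <| monotone_filter_right _ fun i _ hi => hi.trans_le (h i)

lemma card_filter_pos_single_le_one [DecidableEq κ] (i₀ : κ) (a : K) :
    #{i | 0 < Pi.single (M := fun _ => K) i₀ a i} ≤ 1 := by
  refine (card_le_card fun i hi => ?_).trans (card_singleton i₀).le
  by_contra hne
  simp_all

end

variable {ι κ K : Type*} [Fintype ι] [Fintype κ] [AddCommGroup K] [LinearOrder K]
  [IsOrderedAddMonoid K]

lemma exists_eq_single_of_card_filter_pos_le_one [DecidableEq κ] {v : κ → K} (hv : 0 ≤ v)
    (hsum : 0 < ∑ i, v i) (hcard : #{i | 0 < v i} ≤ 1) :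
    ∃ i₀, v = Pi.single i₀ (∑ i, v i) := by
  obtain ⟨i₀, hi₀⟩ : ∃ i₀, 0 < v i₀ := by
    by_contra! h
    exact hsum.not_ge (sum_nonpos fun i _ => h i)
  have hzero : ∀ i ≠ i₀, v i = 0 := fun i hi =>
    ((hv i).eq_or_lt.resolve_right fun hpos => hcard.not_gt <|
      one_lt_card.2 ⟨i, by simpa using hpos, i₀, by simpa using hi₀, hi⟩).symm
  refine ⟨i₀, ?_⟩
  rw [Fintype.sum_eq_single i₀ hzero]
  ext i
  rcases eq_or_ne i i₀ with rfl | hi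
  · simp
  · simp [hi, hzero i hi]

lemma exists_exchange_splitJobs [DecidableEq ι] [DecidableEq κ] {f : ι → κ → K} (hf : 0 ≤ f)
    {j j' : ι} (hj : j ∈ splitJobs f) (hj' : j' ∉ splitJobs f)
    (hlt : ∑ i, f j i < ∑ i, f j' i) :
    ∃ g : ι → κ → K, 0 ≤ g ∧ (∀ a, ∑ i, g a i = ∑ i, f a i) ∧ ∑ a, g a = ∑ a, f a ∧
      splitJobs g = insert j' ((splitJobs f).erase j) := by
  have hne : j ≠ j' := by rintro rfl; exact hj' hj
  obtain ⟨i₀, hi₀⟩ : ∃ i₀, f j' = Pi.single i₀ (∑ i, f j' i) :=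
    exists_eq_single_of_card_filter_pos_le_one (hf j')
      ((sum_nonneg fun i _ => hf j i).trans_lt hlt) (by simpa using hj')
  set d := ∑ i, f j' i - ∑ i, f j i
  have hd : 0 ≤ d := sub_nonneg.2 hlt.le
  set g := update (update f j (Pi.single i₀ (∑ i, f j i))) j' (f j + Pi.single i₀ d)
  have hgj : g j = Pi.single i₀ (∑ i, f j i) := by simp [g, hne]
  have hgj' : g j' = f j + Pi.single i₀ d := by simp [g]
  have hg : ∀ a, a ≠ j → a ≠ j' → g a = f a := fun a ha ha' => by simp [g, ha, ha']
  refine ⟨g, fun a => ?_, fun a => ?_, ?_, ?_⟩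
  · rcases eq_or_ne a j with rfl | ha
    · simpa [hgj] using (sum_nonneg fun i _ => hf a i)
    rcases eq_or_ne a j' with rfl | ha'
    · rw [hgj']
      exact add_nonneg (hf j) (Pi.single_nonneg.2 hd)
    · rw [hg a ha ha']
      exact hf a
  · rcases eq_or_ne a j with rfl | ha
    · simp [hgj]
    rcases eq_or_ne a j' with rfl | ha'
    · simp [hgj', sum_add_distrib, d]
    · rw [hg a ha ha']
  · refine sum_update_update_of_add_eq f hne ?_
    rw [hi₀, add_left_comm, ← Pi.single_add, add_sub_cancel]
  · ext a
    rcases eq_or_ne a j with rfl | ha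
    · simpa [hgj, hne] using card_filter_pos_single_le_one i₀ (∑ i, f a i)
    rcases eq_or_ne a j' with rfl | ha'
    · simpa [hgj'] using (mem_splitJobs.1 hj).trans_le <|
        card_filter_pos_mono (le_add_of_nonneg_right (Pi.single_nonneg.2 hd))
    · simp [hg a ha ha', ha, ha']

theorem exists_splitJobs_longest [DecidableEq ι] [DecidableEq κ] {f : ι → κ → K} (hf : 0 ≤ f) :
    ∃ g : ι → κ → K, 0 ≤ g ∧ (∀ a, ∑ i, g a i = ∑ i, f a i) ∧ ∑ a, g a = ∑ a, f a ∧
      #(splitJobs g) ≤ #(splitJobs f) ∧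
      ∀ j ∈ splitJobs g, ∀ j' ∉ splitJobs g, ∑ i, g j' i ≤ ∑ i, g j i := by
  set A : Set (ι → κ → K) := {g | 0 ≤ g ∧ (∀ a, ∑ i, g a i = ∑ i, f a i) ∧
    ∑ a, g a = ∑ a, f a ∧ #(splitJobs g) ≤ #(splitJobs f)}
  set len : Finset ι → K := fun S => ∑ a ∈ S, ∑ i, f a i
  obtain ⟨_, ⟨g, ⟨hg0, hgrow, hgcol, hgcard⟩, rfl⟩, hmax⟩ :=
    (splitJobs '' A).exists_max_image len (Set.toFinite _)
      ⟨_, f, ⟨hf, fun _ => rfl, rfl, le_rfl⟩, rfl⟩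
  refine ⟨g, hg0, hgrow, hgcol, hgcard, fun j hj j' hj' => ?_⟩
  by_contra! hlt
  obtain ⟨g', hg'0, hg'row, hg'col, hg'split⟩ := exists_exchange_splitJobs hg0 hj hj' hlt
  have hj'erase : j' ∉ (splitJobs g).erase j := fun h => hj' (mem_of_mem_erase h)
  have hcard : #(splitJobs g') = #(splitJobs g) := by
    rw [hg'split, card_insert_of_notMem hj'erase, card_erase_add_one hj]
  have hle := hmax _ ⟨g', ⟨hg'0, fun a => (hg'row a).trans (hgrow a), hg'col.trans hgcol,
    hcard ▸ hgcard⟩, rfl⟩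
  rw [hgrow, hgrow] at hlt
  simp only [len, hg'split, sum_insert hj'erase, ← sum_erase_add _ _ hj] at hle
  exact hle.not_gt (by rw [add_comm]; gcongr)

theorem stmt_9_general (m n : ℕ)
    (x : Fin m → ℕ)
    (r : Fin n → ℕ)
    (f : Fin m → Fin n → ℚ) (hf0 : ∀ j i, 0 ≤ f j i)
    (hfsum : ∀ j, ∑ i, f j i = (x j : ℚ))
    (s : ℕ)
    (hs : (Finset.univ.filter (fun j =>
        1 < (Finset.univ.filter (fun i => 0 < f j i)).card)).card = s) :
    ∃ f' : Fin m → Fin n → ℚ,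
      (∀ j i, 0 ≤ f' j i) ∧
      (∀ j, ∑ i, f' j i = (x j : ℚ)) ∧
      (∀ i, (∑ j, f' j i) / (r i : ℚ) = (∑ j, f j i) / (r i : ℚ)) ∧
      (Finset.univ.filter (fun j =>
          1 < (Finset.univ.filter (fun i => 0 < f' j i)).card)).card ≤ s ∧
      (∀ j j' : Fin m,
        1 < (Finset.univ.filter (fun i => 0 < f' j i)).card →
        ¬ 1 < (Finset.univ.filter (fun i => 0 < f' j' i)).card →
        x j' ≤ x j) := by
  obtain ⟨g, hg0, hgrow, hgcol, hgcard, hglong⟩ := exists_splitJobs_longest (f := f) hf0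
  refine ⟨g, hg0, fun j => (hgrow j).trans (hfsum j), fun i => ?_, hs ▸ hgcard,
    fun j j' hj hj' => ?_⟩
  · rw [← Finset.sum_apply i, hgcol, Finset.sum_apply]
  · have hlen := hglong j (mem_splitJobs.2 hj) j' (mt mem_splitJobs.1 hj')
    rwa [hgrow, hgrow, hfsum, hfsum, Nat.cast_le] at hlen

/-- for every fractional allocation with `s` split jobs there is a fractional
allocation with the same completion times, at most `s` split jobs, in which every split job is
at least as long as every non-split job (only the longest jobs are split). -/
theorem stmt_9 (m n : ℕ)
    (x : Fin m → ℕ) (hx : ∀ j, 0 < x j)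
    (r : Fin n → ℕ) (hr : ∀ i, 0 < r i)
    (f : Fin m → Fin n → ℚ) (hf0 : ∀ j i, 0 ≤ f j i)
    (hfsum : ∀ j, ∑ i, f j i = (x j : ℚ))
    (s : ℕ)
    (hs : (Finset.univ.filter (fun j =>
        1 < (Finset.univ.filter (fun i => 0 < f j i)).card)).card = s) :
    ∃ f' : Fin m → Fin n → ℚ,
      (∀ j i, 0 ≤ f' j i) ∧
      (∀ j, ∑ i, f' j i = (x j : ℚ)) ∧
      (∀ i, (∑ j, f' j i) / (r i : ℚ) = (∑ j, f j i) / (r i : ℚ)) ∧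
      (Finset.univ.filter (fun j =>
          1 < (Finset.univ.filter (fun i => 0 < f' j i)).card)).card ≤ s ∧
      (∀ j j' : Fin m,
        1 < (Finset.univ.filter (fun i => 0 < f' j i)).card →
        ¬ 1 < (Finset.univ.filter (fun i => 0 < f' j' i)).card →
        x j' ≤ x j) :=
  stmt_9_general m n x r f hf0 hfsum s hs
end

section
/- Reduction from interval target to split jobs (identical machines). Fix integers n ≥ 2 and d ≥ 0. Let X be a list of jobs with positive integer lengths, with maximum job length nM and sum nS. Let X′ consist of X together with d additional jobs of length nM. Then X admits an integral partition among n identical machines with makespan at most S + d·M if and only if X′ admits a fractional allocation among n identical machines with at most d split jobs in which every machine's completion time equals S + d·M (a perfect partition of X′). -/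
/-!
Given a partition of `X` with loads `L i ≤ T = S + d M`, cut each of the `d` extra jobs (of length
`n M`) into pieces `(T - L i) / d`: the gaps `T - L i` total `n T - n S = d · n M`, so every machine
is filled exactly to `T` and only extra jobs are split.

Conversely, in a perfect allocation of `X′` with at most `d` split jobs, the unsplit extra jobs are
at least as many as the split original ones. Leave each unsplit original job on its machine and
move each split original job to the machine of its own unsplit extra job, which is at least as
long; every load is then bounded by the completion time `T`.
-/

/-- The job lengths of `X′`: the jobs of `X` together with `d` extra jobs whose length is the
maximum job length of `X`. -/
def xPrime (m d : ℕ) (x : Fin m → ℕ) : (Fin m ⊕ Fin d) → ℕ :=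
  Sum.elim x (fun _ => Finset.univ.sup x)

open Finset Function

def IsSplit {ι : Type*} [Fintype ι] (g : ι → ℚ) : Prop :=
  1 < #{i | 0 < g i}

instance {ι : Type*} [Fintype ι] : DecidablePred (IsSplit (ι := ι)) :=
  fun g => inferInstanceAs (Decidable (1 < #{i | 0 < g i}))

theorem eq_sum_of_not_isSplit {ι : Type*} [Fintype ι] {g : ι → ℚ} (hg : ∀ i, 0 ≤ g i)
    (h : ¬ IsSplit g) {i₀ : ι} (hi₀ : 0 < g i₀) : g i₀ = ∑ i, g i := by
  refine (sum_eq_single i₀ (fun i _ hi => ?_) (by simp)).symm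
  by_contra hne
  have hpos : 0 < g i := lt_of_le_of_ne (hg i) (Ne.symm hne)
  exact h (one_lt_card.2 ⟨i, by simpa using hpos, i₀, by simpa using hi₀, hi⟩)

theorem card_filter_sum_type {α β : Type*} [Fintype α] [Fintype β] (p : α ⊕ β → Prop)
    [DecidablePred p] : #{J | p J} = #{a | p (.inl a)} + #{b | p (.inr b)} := by
  simp only [card_filter, Fintype.sum_sum_type]

theorem exists_injective_not_of_card_filter_le {α β : Type*} [Fintype α] [Fintype β]
    (p : α ⊕ β → Prop) [DecidablePred p] (h : #{J | p J} ≤ Fintype.card β) :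
    ∃ c : α → α ⊕ β, Injective c ∧ ∀ a, ¬ p (c a) ∧ (c a = .inl a ∨ (c a).isRight) := by
  have hcard : Fintype.card {a // p (.inl a)} ≤ Fintype.card {b // ¬ p (.inr b)} := by
    have hβ := card_filter_add_card_filter_not (s := (univ : Finset β)) (fun b => p (.inr b))
    rw [card_filter_sum_type] at h
    rw [card_univ] at hβ
    rw [Fintype.card_subtype, Fintype.card_subtype]
    omega
  obtain ⟨e⟩ := Function.Embedding.nonempty_of_card_le hcard
  refine ⟨fun a => if ha : p (.inl a) then .inr (e ⟨a, ha⟩) else .inl a, ?_, fun a => ?_⟩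
  · intro a a' haa'
    by_cases ha : p (.inl a) <;> by_cases ha' : p (.inl a') <;>
      simp only [ha, ha', dite_true, dite_false, Sum.inr.injEq, Sum.inl.injEq,
        reduceCtorEq] at haa'
    · exact congrArg Subtype.val (e.injective (Subtype.ext haa'))
    · exact haa'
  · by_cases ha : p (.inl a)
    · simpa [ha] using (e ⟨a, ha⟩).2
    · simp [ha]

theorem sum_filter_le_sum_of_injective {α κ ι M : Type*} [Fintype κ] [DecidableEq ι]
    [AddCommMonoid M] [PartialOrder M] [IsOrderedAddMonoid M]
    {f : κ → ι → M} (hf : ∀ J i, 0 ≤ f J i) {c : α → κ} (hc : Injective c) {P : α → ι}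
    {x : α → M} (hx : ∀ a, x a ≤ f (c a) (P a)) (s : Finset α) (i : ι) :
    ∑ a ∈ s with P a = i, x a ≤ ∑ J, f J i :=
  calc ∑ a ∈ s with P a = i, x a
      ≤ ∑ a ∈ s with P a = i, f (c a) i :=
        sum_le_sum fun a ha => (mem_filter.1 ha).2 ▸ hx a
    _ = ∑ J ∈ (s.filter (P · = i)).map ⟨c, hc⟩, f J i := by rw [sum_map]; rfl
    _ ≤ ∑ J, f J i := sum_le_univ_sum_of_nonneg fun J => hf J i

section xPrime

variable {m d : ℕ} {x : Fin m → ℕ}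

theorem le_xPrime {j : Fin m} {J : Fin m ⊕ Fin d} (hJ : J = .inl j ∨ J.isRight) :
    x j ≤ xPrime m d x J := by
  rcases J with j' | k
  · simp_all [xPrime]
  · exact le_sup (mem_univ j)

theorem xPrime_pos (hm : 0 < m) (hx : ∀ j, 0 < x j) (J : Fin m ⊕ Fin d) :
    0 < xPrime m d x J := by
  rcases J with j | k
  · exact hx j
  · exact (hx ⟨0, hm⟩).trans_le (le_xPrime (J := .inr k) (Or.inr rfl))

end xPrime

theorem exists_perfect_allocation_of_partition {n d m : ℕ} {x : Fin m → ℕ} {M S : ℚ}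
    (hM : ((univ.sup x : ℕ) : ℚ) = n * M) (hS : ∑ j, (x j : ℚ) = n * S)
    {P : Fin m → Fin n} (hP : ∀ i, ∑ j ∈ univ.filter (P · = i), (x j : ℚ) ≤ S + d * M) :
    ∃ f : (Fin m ⊕ Fin d) → Fin n → ℚ, (∀ J i, 0 ≤ f J i) ∧
      (∀ J, ∑ i, f J i = (xPrime m d x J : ℚ)) ∧ #{J | IsSplit (f J)} ≤ d ∧
      ∀ i, ∑ J, f J i = S + d * M := by
  set T := S + d * M
  set L : Fin n → ℚ := fun i => ∑ j ∈ univ.filter (P · = i), (x j : ℚ)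
  have hgap_nonneg : ∀ i, 0 ≤ T - L i := fun i => sub_nonneg.2 (hP i)
  have hgap : ∑ i, (T - L i) = d * (univ.sup x : ℕ) := by
    rw [sum_sub_distrib, sum_const, card_univ, Fintype.card_fin, sum_fiberwise, hS, hM]
    simp only [T, nsmul_eq_mul]
    ring
  have hgap_zero : d = 0 → ∀ i, T - L i = 0 := by
    intro hd i
    simp only [hd, CharP.cast_eq_zero, zero_mul] at hgap
    exact (sum_eq_zero_iff_of_nonneg fun i _ => hgap_nonneg i).1 hgap i (mem_univ i)
  refine ⟨Sum.elim (fun j i => if P j = i then (x j : ℚ) else 0) (fun _ i => (T - L i) / d),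
    ?_, ?_, ?_, ?_⟩
  · rintro (j | k) i
    · dsimp only [Sum.elim_inl]
      split <;> positivity
    · exact div_nonneg (hgap_nonneg i) d.cast_nonneg
  · rintro (j | k)
    · simp [xPrime]
    · have hd : (d : ℚ) ≠ 0 := Nat.cast_ne_zero.2 k.pos.ne'
      rw [Sum.elim_inr, ← sum_div, hgap, mul_div_cancel_left₀ _ hd]
      rfl
  · have hinl : ∀ j, ¬ IsSplit (fun i => if P j = i then (x j : ℚ) else 0) := by
      intro j
      refine not_lt.2 <|
        (card_le_card fun i hi => mem_singleton.2 ?_).trans (card_singleton (P j)).le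
      by_contra hne
      simp [Ne.symm hne] at hi
    simp only [card_filter_sum_type, Sum.elim_inl, Sum.elim_inr, hinl, filter_false, card_empty,
      zero_add]
    exact (card_filter_le _ _).trans (card_univ.trans (Fintype.card_fin d)).le
  · intro i
    rw [Fintype.sum_sum_type]
    simp only [Sum.elim_inl, Sum.elim_inr, sum_const, card_univ, Fintype.card_fin, nsmul_eq_mul]
    rw [← sum_filter, mul_comm, div_mul_cancel_of_imp fun hd => hgap_zero (by exact_mod_cast hd) i]
    ring

theorem exists_partition_of_perfect_allocation {n d m : ℕ} (hm : 0 < m) {x : Fin m → ℕ}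
    (hx : ∀ j, 0 < x j) {T : ℚ} {f : (Fin m ⊕ Fin d) → Fin n → ℚ} (hf : ∀ J i, 0 ≤ f J i)
    (hrow : ∀ J, ∑ i, f J i = (xPrime m d x J : ℚ)) (hsplit : #{J | IsSplit (f J)} ≤ d)
    (hcol : ∀ i, ∑ J, f J i = T) :
    ∃ P : Fin m → Fin n, ∀ i, ∑ j ∈ univ.filter (P · = i), (x j : ℚ) ≤ T := by
  have hpos : ∀ J, ∑ i, (0 : Fin n → ℚ) i < ∑ i, f J i := fun J => by
    simpa [hrow] using xPrime_pos hm hx J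
  choose w _ hw using fun J => exists_lt_of_sum_lt (hpos J)
  obtain ⟨c, hc, hcU⟩ := exists_injective_not_of_card_filter_le (fun J => IsSplit (f J))
    (by rwa [Fintype.card_fin])
  have hcarry : ∀ j, (x j : ℚ) ≤ f (c j) (w (c j)) := fun j => by
    rw [eq_sum_of_not_isSplit (hf _) (hcU j).1 (hw _), hrow]
    exact_mod_cast le_xPrime (hcU j).2
  exact ⟨fun j => w (c j), fun i => (sum_filter_le_sum_of_injective hf hc hcarry _ i).trans_eq
    (hcol i)⟩

theorem stmt_10_general (n d : ℕ) (m : ℕ) (hm : 0 < m)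
    (x : Fin m → ℕ) (hx : ∀ j, 0 < x j)
    (M S : ℚ)
    (hM : ((Finset.univ.sup x : ℕ) : ℚ) = (n : ℚ) * M)
    (hS : (∑ j, (x j : ℚ)) = (n : ℚ) * S) :
    (∃ P : Fin m → Fin n, ∀ i : Fin n,
        (∑ j ∈ Finset.univ.filter (fun j => P j = i), (x j : ℚ)) ≤ S + (d : ℚ) * M) ↔
    (∃ f : (Fin m ⊕ Fin d) → Fin n → ℚ,
        (∀ j i, 0 ≤ f j i) ∧
        (∀ j, ∑ i, f j i = (xPrime m d x j : ℚ)) ∧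
        (Finset.univ.filter (fun j : Fin m ⊕ Fin d =>
            1 < (Finset.univ.filter (fun i => 0 < f j i)).card)).card ≤ d ∧
        (∀ i : Fin n, ∑ j, f j i = S + (d : ℚ) * M)) := by
  constructor
  · rintro ⟨P, hP⟩
    exact exists_perfect_allocation_of_partition hM hS hP
  · rintro ⟨f, hf, hrow, hsplit, hcol⟩
    exact exists_partition_of_perfect_allocation hm hx hf hrow hsplit hcol

/-- reduction from interval target to split jobs on identical machines.
`X` has an integral partition with makespan at most `S + d·M` iff `X′` (which adds `d` jobs of
the maximum length `n·M`) has a fractional allocation with at most `d` split jobs in which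
every machine's completion time equals `S + d·M`. -/
theorem stmt_10 (n d : ℕ) (hn : 2 ≤ n) (m : ℕ) (hm : 0 < m)
    (x : Fin m → ℕ) (hx : ∀ j, 0 < x j)
    (M S : ℚ)
    (hM : ((Finset.univ.sup x : ℕ) : ℚ) = (n : ℚ) * M)
    (hS : (∑ j, (x j : ℚ)) = (n : ℚ) * S) :
    (∃ P : Fin m → Fin n, ∀ i : Fin n,
        (∑ j ∈ Finset.univ.filter (fun j => P j = i), (x j : ℚ)) ≤ S + (d : ℚ) * M) ↔
    (∃ f : (Fin m ⊕ Fin d) → Fin n → ℚ,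
        (∀ j i, 0 ≤ f j i) ∧
        (∀ j, ∑ i, f j i = (xPrime m d x j : ℚ)) ∧
        (Finset.univ.filter (fun j : Fin m ⊕ Fin d =>
            1 < (Finset.univ.filter (fun i => 0 < f j i)).card)).card ≤ d ∧
        (∀ i : Fin n, ∑ j, f j i = S + (d : ℚ) * M)) :=
  stmt_10_general n d m hm x hx M S hM hS
end

section
/- Core of the FPTAS for splitting. Let s ≥ 0 be an integer, let X₁ be a set of s longest jobs of X and X₂ the remaining jobs, and let S = (Σ_{j∈X} x_j)/A. Then: (i) for every integral partition of X₂ among the n machines with makespan B, there exists a fractional allocation of all of X among the n machines in which at most the s jobs of X₁ are split and whose makespan is at most max(S, B); and (ii) for every fractional allocation of X among the n machines with at most s split jobs and makespan B′, there exists an integral partition of X₂ among the n machines with makespan at most B′. (Hence the minimum makespan over allocations of X with at most s split jobs equals max(S, minimum makespan over integral partitions of X₂).) -/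
/-!
(i) Once the short jobs sit on the machines according to `P`, machine `i` still has room
`max S B * r i` minus its load, and these rooms add up to at least the total length of the long
jobs because `S * A` is the total length of all jobs. Spreading every long job over the machines
in proportion to the rooms fills no machine beyond its room.

(ii) Every job that is not split lies entirely on one machine. There are at most `s` split jobs,
so the split short jobs are no more numerous than the unsplit long ones; map them injectively
onto those and put each on the machine of its image. A short job is no longer than a long one,
and distinct short jobs take the places of distinct jobs of the allocation, so no machine ends
up above its load in the fractional allocation.
-/

open Finset

section Packing

variable {ι κ K : Type*} [Fintype κ] [Field K] [LinearOrder K] [IsStrictOrderedRing K]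

theorem exists_fractional_packing {s : Finset ι} {x : ι → K} (hx : ∀ j ∈ s, 0 ≤ x j)
    {d : κ → K} (hd : ∀ i, 0 ≤ d i) (htot : ∑ j ∈ s, x j ≤ ∑ i, d i) :
    ∃ g : ι → κ → K, (∀ j ∈ s, ∀ i, 0 ≤ g j i) ∧ (∀ j ∈ s, ∑ i, g j i = x j) ∧
      ∀ i, ∑ j ∈ s, g j i ≤ d i := by
  set D := ∑ i, d i
  have hD : 0 ≤ D := sum_nonneg fun i _ => hd i
  refine ⟨fun j i => x j * d i / D, fun j hj i => div_nonneg (mul_nonneg (hx j hj) (hd i)) hD,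
    fun j hj => ?_, fun i => ?_⟩
  · rw [← sum_div, ← mul_sum]
    rcases hD.eq_or_lt with hD0 | hDpos
    · have : x j = 0 := le_antisymm
        ((single_le_sum hx hj).trans (htot.trans hD0.ge)) (hx j hj)
      simp [this]
    · exact mul_div_cancel_right₀ _ hDpos.ne'
  · rw [← sum_div, ← sum_mul]
    exact div_le_of_le_mul₀ hD (hd i) 
      (by rw [mul_comm]; exact mul_le_mul_of_nonneg_left htot (hd i))

variable [Fintype ι] [DecidableEq ι] [DecidableEq κ]

theorem exists_allocation_of_partition_compl {x : ι → K} (hx : ∀ j, 0 ≤ x j) {c : κ → K}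
    {T : Finset ι} {P : ι → κ} (hP : ∀ i, ∑ j ∈ Tᶜ with P j = i, x j ≤ c i)
    (htot : ∑ j, x j ≤ ∑ i, c i) :
    ∃ f : ι → κ → K, (∀ j i, 0 ≤ f j i) ∧ (∀ j, ∑ i, f j i = x j) ∧
      (∀ j, 1 < #{i | 0 < f j i} → j ∈ T) ∧ ∀ i, ∑ j, f j i ≤ c i := by
  set L := fun i => ∑ j ∈ Tᶜ with P j = i, x j
  have hfree : ∑ j ∈ T, x j ≤ ∑ i, (c i - L i) := by
    have := sum_add_sum_compl T x
    rw [sum_sub_distrib, sum_fiberwise]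
    linarith
  obtain ⟨g, hg0, hgrow, hgcol⟩ :=
    exists_fractional_packing (fun j _ => hx j) (fun i => sub_nonneg.2 (hP i)) hfree
  refine ⟨fun j i => if j ∈ T then g j i else if P j = i then x j else 0, ?_, ?_, ?_, ?_⟩
  · intro j i
    by_cases hj : j ∈ T
    · simpa [hj] using hg0 j hj i
    · simp only [hj, if_false]; split_ifs <;> simp [hx j]
  · intro j
    by_cases hj : j ∈ T
    · simpa [hj] using hgrow j hj
    · simp [hj]
  · intro j hsplit
    by_contra hj
    have hP_of_pos : ∀ i, 0 < (if P j = i then x j else 0) → P j = i := fun i h => by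
      by_contra hne
      simp [hne] at h
    refine hsplit.not_ge (card_le_one.2 fun a ha b hb => ?_)
    simp only [hj, if_false, mem_filter] at ha hb
    exact (hP_of_pos a ha.2).symm.trans (hP_of_pos b hb.2)
  · intro i
    have hTload : ∑ j ∈ T, (if j ∈ T then g j i else if P j = i then x j else 0) =
        ∑ j ∈ T, g j i := sum_congr rfl fun j hj => if_pos hj
    have hTcload : ∑ j ∈ Tᶜ, (if j ∈ T then g j i else if P j = i then x j else 0) = L i := by
      rw [sum_congr rfl fun j hj => if_neg (mem_compl.1 hj), ← sum_filter]
    rw [← sum_add_sum_compl T, hTload, hTcload]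
    linarith [hgcol i]

end Packing

lemma Finset.exists_mapsTo_injOn_of_card_le {α : Type*} {s t : Finset α} (h : #s ≤ #t) :
    ∃ e : α → α, Set.MapsTo e s t ∧ Set.InjOn e s := by
  cases isEmpty_or_nonempty α
  · exact ⟨id, fun a => isEmptyElim a, fun a => isEmptyElim a⟩
  · exact s.finite_toSet.exists_injOn_of_encard_le (t := (t : Set α))
      (by simpa [Set.encard_coe_eq_coe_finsetCard])

section Reassignment

variable {ι κ K : Type*} [Fintype ι] [DecidableEq ι] [Fintype κ]

lemma exists_injOn_compl_notMem_le {β : Type*} [Preorder β] (x : ι → β) {D T : Finset ι}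
    (hcard : #D ≤ #T) (hlong : ∀ j ∉ T, ∀ t ∈ T, x j ≤ x t) :
    ∃ φ : ι → ι, Set.InjOn φ ↑Tᶜ ∧ ∀ j ∉ T, φ j ∉ D ∧ x j ≤ x (φ j) := by
  have hsdiff : #(D \ T) ≤ #(T \ D) := by
    have := card_sdiff_add_card_inter D T
    have := card_sdiff_add_card_inter T D
    rw [inter_comm] at this
    omega
  obtain ⟨e, he, hinj⟩ := exists_mapsTo_injOn_of_card_le hsdiff
  have he' : ∀ j ∉ T, j ∈ D → e j ∈ T ∧ e j ∉ D := fun j hjT hjD =>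
    mem_sdiff.1 (he (mem_sdiff.2 ⟨hjD, hjT⟩))
  refine ⟨fun j => if j ∈ D then e j else j, ?_, fun j hjT => ?_⟩
  · intro a ha b hb hab
    simp only [coe_compl, Set.mem_compl_iff, mem_coe] at ha hb
    by_cases haD : a ∈ D <;> by_cases hbD : b ∈ D <;>
      simp only [haD, hbD, if_true, if_false] at hab
    · exact hinj (by simp [haD, ha]) (by simp [hbD, hb]) hab
    · exact absurd (hab ▸ (he' a ha haD).1) hb
    · exact absurd (hab ▸ (he' b hb hbD).1) ha
    · exact hab
  · by_cases hjD : j ∈ D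
    · simp only [hjD, if_true]
      exact ⟨(he' j hjT hjD).2, hlong j hjT _ (he' j hjT hjD).1⟩
    · simp [hjD]

variable [AddCommMonoid K] [LinearOrder K]

lemma sum_eq_of_card_filter_pos_le_one {g : κ → K} (hg : ∀ i, 0 ≤ g i)
    (hcard : #{i | 0 < g i} ≤ 1) {i : κ} (hi : 0 < g i) : ∑ i, g i = g i := by
  refine sum_eq_single i (fun k _ hki => ?_) (by simp)
  by_contra hk
  exact hki (card_le_one.1 hcard k (by simpa using (hg k).lt_of_ne' hk) i (by simpa using hi))

theorem exists_partition_compl_le_of_allocation [DecidableEq κ] [IsOrderedCancelAddMonoid K]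
    {x : ι → K} (hx : ∀ j, 0 < x j) {f : ι → κ → K} (hf : ∀ j i, 0 ≤ f j i)
    (hrow : ∀ j, ∑ i, f j i = x j) {T : Finset ι}
    (hsplit : #{j | 1 < #{i | 0 < f j i}} ≤ #T) (hlong : ∀ j ∉ T, ∀ t ∈ T, x j ≤ x t) :
    ∃ P : ι → κ, ∀ i, ∑ j ∈ Tᶜ with P j = i, x j ≤ ∑ j, f j i := by
  have hpos : ∀ j, ∃ i, 0 < f j i := fun j => by
    simpa using exists_lt_of_sum_lt (s := univ) (f := 0) (g := f j) (by simpa [hrow] using hx j)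
  choose home hhome using hpos
  have hhome_eq : ∀ j, ¬ 1 < #{i | 0 < f j i} → f j (home j) = x j := fun j hj =>
    hrow j ▸ (sum_eq_of_card_filter_pos_le_one (hf j) (not_lt.1 hj) (hhome j)).symm
  obtain ⟨φ, hinj, hφ⟩ := exists_injOn_compl_notMem_le x hsplit hlong
  refine ⟨home ∘ φ, fun i => ?_⟩
  calc ∑ j ∈ Tᶜ with home (φ j) = i, x j
      ≤ ∑ j ∈ Tᶜ with home (φ j) = i, f (φ j) i := sum_le_sum fun j hj => by
        obtain ⟨hjT, rfl⟩ := mem_filter.1 hj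
        obtain ⟨hunsplit, hle⟩ := hφ j (mem_compl.1 hjT)
        exact hle.trans (hhome_eq (φ j) (by simpa using hunsplit)).ge
    _ = ∑ k ∈ (Tᶜ.filter fun j => home (φ j) = i).image φ, f k i :=
        (sum_image (f := fun k => f k i) fun a ha b hb =>
          hinj (filter_subset _ _ ha) (filter_subset _ _ hb)).symm
    _ ≤ ∑ k, f k i := sum_le_univ_sum_of_nonneg fun k => hf k i

end Reassignment

theorem stmt_13_general (m n s : ℕ) (hn : 0 < n)
    (x : Fin m → ℕ) (hx : ∀ j, 0 < x j)
    (r : Fin n → ℕ) (hr : ∀ i, 0 < r i)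
    (S : ℚ) (hS : S = (∑ j, (x j : ℚ)) / ((∑ i, r i : ℕ) : ℚ))
    (T : Finset (Fin m)) (hT : T.card = s)
    (hlong : ∀ j ∉ T, ∀ j' ∈ T, x j ≤ x j') :
    -- (i)
    (∀ (B : ℚ) (P : Fin m → Fin n),
        (∀ i, (∑ j ∈ Tᶜ.filter (fun j => P j = i), (x j : ℚ)) / (r i : ℚ) ≤ B) →
        ∃ f : Fin m → Fin n → ℚ,
          (∀ j i, 0 ≤ f j i) ∧
          (∀ j, ∑ i, f j i = (x j : ℚ)) ∧
          (∀ j, 1 < (Finset.univ.filter (fun i => 0 < f j i)).card → j ∈ T) ∧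
          (∀ i, (∑ j, f j i) / (r i : ℚ) ≤ max S B)) ∧
    -- (ii)
    (∀ (B' : ℚ) (f : Fin m → Fin n → ℚ),
        (∀ j i, 0 ≤ f j i) →
        (∀ j, ∑ i, f j i = (x j : ℚ)) →
        (Finset.univ.filter (fun j =>
            1 < (Finset.univ.filter (fun i => 0 < f j i)).card)).card ≤ s →
        (∀ i, (∑ j, f j i) / (r i : ℚ) ≤ B') →
        ∃ P : Fin m → Fin n,
          ∀ i, (∑ j ∈ Tᶜ.filter (fun j => P j = i), (x j : ℚ)) / (r i : ℚ) ≤ B') := by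
  have hr' : ∀ i, (0 : ℚ) < r i := fun i => by exact_mod_cast hr i
  have hA : (0 : ℚ) < ((∑ i, r i : ℕ) : ℚ) := by
    have : Nonempty (Fin n) := ⟨⟨0, hn⟩⟩
    exact_mod_cast sum_pos (fun i _ => hr i) univ_nonempty
  refine ⟨fun B P hP => ?_, fun B' f hf hrow hsplit hload => ?_⟩
  · have htot : ∑ j, (x j : ℚ) ≤ ∑ i, max S B * r i :=
      calc ∑ j, (x j : ℚ) = S * ((∑ i, r i : ℕ) : ℚ) := by rw [hS, div_mul_cancel₀ _ hA.ne']
        _ ≤ max S B * ((∑ i, r i : ℕ) : ℚ) := mul_le_mul_of_nonneg_right (le_max_left S B) hA.le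
        _ = ∑ i, max S B * r i := by rw [Nat.cast_sum, mul_sum]
    obtain ⟨f, hf, hrow, hsplit, hload⟩ := exists_allocation_of_partition_compl
      (fun j => (x j).cast_nonneg) (fun i => ((div_le_iff₀ (hr' i)).1 (hP i)).trans
        (mul_le_mul_of_nonneg_right (le_max_right S B) (hr' i).le)) htot
    exact ⟨f, hf, hrow, hsplit, fun i => (div_le_iff₀ (hr' i)).2 (hload i)⟩
  · obtain ⟨P, hP⟩ := exists_partition_compl_le_of_allocation (fun j => by exact_mod_cast hx j)
      hf hrow (hT ▸ hsplit) (fun j hj t ht => by exact_mod_cast hlong j hj t ht)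
    exact ⟨P, fun i =>
      (div_le_iff₀ (hr' i)).2 ((hP i).trans ((div_le_iff₀ (hr' i)).1 (hload i)))⟩

/-- core of the FPTAS with splitting. `T` is a set of `s` longest jobs, `X₂` the
remaining jobs. (i) every integral partition of `X₂` with makespan at most `B` yields a
fractional allocation of all of `X` splitting only jobs of `T`, with makespan at most
`max S B`; (ii) every fractional allocation of `X` with at most `s` split jobs and makespan at
most `B′` yields an integral partition of `X₂` with makespan at most `B′`. -/
theorem stmt_13 (m n s : ℕ) (hn : 0 < n) (hm : s < m)
    (x : Fin m → ℕ) (hx : ∀ j, 0 < x j)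
    (r : Fin n → ℕ) (hr : ∀ i, 0 < r i)
    (S : ℚ) (hS : S = (∑ j, (x j : ℚ)) / ((∑ i, r i : ℕ) : ℚ))
    (T : Finset (Fin m)) (hT : T.card = s)
    (hlong : ∀ j ∉ T, ∀ j' ∈ T, x j ≤ x j') :
    -- (i)
    (∀ (B : ℚ) (P : Fin m → Fin n),
        (∀ i, (∑ j ∈ Tᶜ.filter (fun j => P j = i), (x j : ℚ)) / (r i : ℚ) ≤ B) →
        ∃ f : Fin m → Fin n → ℚ,
          (∀ j i, 0 ≤ f j i) ∧
          (∀ j, ∑ i, f j i = (x j : ℚ)) ∧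
          (∀ j, 1 < (Finset.univ.filter (fun i => 0 < f j i)).card → j ∈ T) ∧
          (∀ i, (∑ j, f j i) / (r i : ℚ) ≤ max S B)) ∧
    -- (ii)
    (∀ (B' : ℚ) (f : Fin m → Fin n → ℚ),
        (∀ j i, 0 ≤ f j i) →
        (∀ j, ∑ i, f j i = (x j : ℚ)) →
        (Finset.univ.filter (fun j =>
            1 < (Finset.univ.filter (fun i => 0 < f j i)).card)).card ≤ s →
        (∀ i, (∑ j, f j i) / (r i : ℚ) ≤ B') →
        ∃ P : Fin m → Fin n,
          ∀ i, (∑ j ∈ Tᶜ.filter (fun j => P j = i), (x j : ℚ)) / (r i : ℚ) ≤ B') :=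
  stmt_13_general m n s hn x hx r hr S hS T hT hlong
end

section
/- Hardness of bounded splittings: reduction correctness. Fix integers n ≥ 2 and 0 ≤ s ≤ n−2. Let X₁ be a list of m positive integers with sum S₀ and let T be a positive integer with T < S₀. Let X₂ consist of the elements of X₁ together with one job of length S₀ + T, one job of length 2S₀(s+1) − T, and n−2−s jobs of length 2S₀. Then X₁ has a subset with sum exactly T if and only if X₂ admits a fractional allocation among n identical machines with at most s splittings in which every machine's completion time equals 2S₀. -/
/-- The job lengths of `X₂`: the jobs of `X₁` together with one job of length `S₀ + T`, one job
of length `2S₀(s+1) - T`, and `n - 2 - s` jobs of length `2S₀` (encoded as `n - s` extra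
jobs). -/
def x2jobs (m : ℕ) (x1 : Fin m → ℕ) (n s S0 T : ℕ) : (Fin m ⊕ Fin (n - s)) → ℕ :=
  Sum.elim x1 (fun k => if (k : ℕ) = 0 then S0 + T
    else if (k : ℕ) = 1 then 2 * S0 * (s + 1) - T else 2 * S0)

/-!
If `W ⊆ X₁` has sum `T`, put the jobs of `W` on machine `1` and the other jobs of `X₁` on
machine `0`, then top every machine up to `2S₀` with one of the new jobs: the job `S₀ + T` tops up
machine `0`, the job `2S₀(s+1) - T` is split over machines `1, …, s + 1`, and each job `2S₀` gets
a machine of its own. Only that one job is split, over `s + 1` machines.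

Conversely, every machine carries at most `2S₀`, so the job of length `2S₀(s+1) - T > 2S₀s` runs
on at least `s + 1` machines. With at most `s` splittings it runs on exactly `s + 1` machines `M`
and no other job is split. The machines of `M` are full, so the other jobs placed inside `M` have
total length `T`; they are shorter than `S₀ + T` and `2S₀`, hence all come from `X₁`.
-/

open Finset

lemma Finset.sum_filter_pos_eq_sum {ι M : Type*} [AddCommMonoid M] [PartialOrder M] {g : ι → M}
    (hg : ∀ i, 0 ≤ g i) (s : Finset ι) [DecidablePred fun i => 0 < g i] :
    ∑ i ∈ s with 0 < g i, g i = ∑ i ∈ s, g i :=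
  sum_filter_of_ne fun i _ h => (hg i).lt_of_ne' h

namespace Allocation

variable {R I J K : Type*}

def splittings [Zero R] [LinearOrder R] [Fintype I] [Fintype J] (f : J → I → R) : ℕ :=
  ∑ j, (#{i | 0 < f j i} - 1)

section Support

variable [CommRing R] [LinearOrder R] [Fintype I] {g : I → R}

lemma lt_card_filter_pos_of_mul_lt_sum [IsStrictOrderedRing R] {C : R} (hC : 0 ≤ C)
    (hg : ∀ i, 0 ≤ g i) (hgC : ∀ i, g i ≤ C) {s : ℕ} (hs : C * s < ∑ i, g i) :
    s < #{i | 0 < g i} := by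
  have hsum : ∑ i, g i ≤ #{i | 0 < g i} * C := by
    rw [← sum_filter_pos_eq_sum hg, ← nsmul_eq_mul]
    exact sum_le_card_nsmul _ _ _ fun i _ => hgC i
  rw [mul_comm] at hs
  exact_mod_cast lt_of_mul_lt_mul_right (hs.trans_le hsum) hC

lemma sum_eq_zero_or_eq_sum_of_card_filter_pos_le_one (hg : ∀ i, 0 ≤ g i)
    (h1 : #{i | 0 < g i} ≤ 1) (M : Finset I) :
    ∑ i ∈ M, g i = 0 ∨ ∑ i ∈ M, g i = ∑ i, g i := by
  by_cases hM : ({i | 0 < g i} : Finset I) ⊆ M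
  · refine .inr (sum_subset (subset_univ M) fun i _ hiM => ?_)
    exact (hg i).eq_or_lt.resolve_right (fun hi => hiM (hM (by simpa using hi))) |>.symm
  · obtain ⟨i₀, hi₀, hi₀M⟩ := not_subset.mp hM
    refine .inl (sum_eq_zero fun i hiM => ((hg i).eq_or_lt.resolve_right fun hi => ?_).symm)
    exact hi₀M (card_le_one.mp h1 i (by simpa using hi) i₀ hi₀ ▸ hiM)

end Support

section Splittings

variable [CommRing R] [LinearOrder R] [Fintype I] [Fintype J] [DecidableEq J] {f : J → I → R}
  {s : ℕ}

lemma card_filter_pos_le_one_of_splittings_le (hsplit : splittings f ≤ s) {b : J}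
    (hb : s < #{i | 0 < f b i}) {j : J} (hj : j ≠ b) : #{i | 0 < f j i} ≤ 1 := by
  have hpair : (#{i | 0 < f j i} - 1) + (#{i | 0 < f b i} - 1) ≤ splittings f := by
    rw [splittings, ← sum_pair (f := fun j => #{i | 0 < f j i} - 1) hj]
    exact sum_le_sum_of_subset (subset_univ _)
  omega

theorem exists_subset_sum_eq_of_splittings_le [IsStrictOrderedRing R] {C : R}
    (hf : ∀ j i, 0 ≤ f j i) (hC : 0 ≤ C) (hcol : ∀ i, ∑ j, f j i = C)
    (hsplit : splittings f ≤ s) (b : J) (hb : C * s < ∑ i, f b i) :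
    ∃ U ⊆ univ.erase b, ∑ j ∈ U, ∑ i, f j i = C * (s + 1) - ∑ i, f b i := by
  set M : Finset I := {i | 0 < f b i}
  have hfC : ∀ j i, f j i ≤ C := fun j i =>
    hcol i ▸ single_le_sum (fun j _ => hf j i) (mem_univ j)
  have hsM : s < #M := lt_card_filter_pos_of_mul_lt_sum hC (hf b) (hfC b) hb
  have hM : #M = s + 1 := by
    have : #M - 1 ≤ splittings f :=
      single_le_sum (f := fun j => #{i | 0 < f j i} - 1) (fun _ _ => Nat.zero_le _) (mem_univ b)
    omega
  have hM_load : ∑ j ∈ univ.erase b, ∑ i ∈ M, f j i = C * (s + 1) - ∑ i, f b i := by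
    have hfull : ∑ j, ∑ i ∈ M, f j i = C * (s + 1) := by
      rw [sum_comm, sum_congr rfl fun i _ => hcol i, sum_const, hM, nsmul_eq_mul]
      push_cast
      ring
    rw [← add_sum_erase _ _ (mem_univ b), sum_filter_pos_eq_sum (hf b)] at hfull
    exact eq_sub_of_add_eq' hfull
  refine ⟨(univ.erase b).filter fun j => ∑ i ∈ M, f j i ≠ 0, filter_subset _ _, ?_⟩
  rw [← hM_load]
  refine (sum_congr rfl fun j hj => ?_).trans (sum_filter_ne_zero _)
  obtain ⟨hjb, hjM⟩ := mem_filter.mp hj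
  exact ((sum_eq_zero_or_eq_sum_of_card_filter_pos_le_one (hf j)
    (card_filter_pos_le_one_of_splittings_le hsplit hsM (ne_of_mem_erase hjb)) M).resolve_left
      hjM).symm

end Splittings

section Fill

variable [CommRing R] [Fintype J] [DecidableEq I] [DecidableEq K]
  (σ : J → I) (x : J → R) (owner : I → K) (C : R)

def load (i : I) : R := ∑ j, if σ j = i then x j else 0

def fill : J ⊕ K → I → R :=
  Sum.elim (fun j i => if σ j = i then x j else 0)
    (fun k i => if owner i = k then C - load σ x i else 0)

variable {σ x owner C}

lemma load_le_sum [LinearOrder R] [IsStrictOrderedRing R] (hx : ∀ j, 0 ≤ x j) (i : I) :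
    load σ x i ≤ ∑ j, x j :=
  sum_le_sum fun j _ => by split_ifs <;> simp [hx j]

lemma fill_nonneg [LinearOrder R] [IsStrictOrderedRing R] (hx : ∀ j, 0 ≤ x j)
    (hload : ∀ i, load σ x i ≤ C) : ∀ p i, 0 ≤ fill σ x owner C p i := by
  rintro (j | k) i <;> simp only [fill, Sum.elim_inl, Sum.elim_inr] <;> split_ifs
  all_goals first | exact le_rfl | exact hx j | exact sub_nonneg.mpr (hload i)

lemma sum_fill_apply [Fintype K] (i : I) : ∑ p, fill σ x owner C p i = C := by
  simp [fill, Fintype.sum_sum_type, load]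

lemma sum_fill_inl [Fintype I] (j : J) : ∑ i, fill σ x owner C (.inl j) i = x j := by
  simp [fill]

lemma sum_fill_inr [Fintype I] (k : K) :
    ∑ i, fill σ x owner C (.inr k) i =
      C * #{i | owner i = k} - ∑ j, if owner (σ j) = k then x j else 0 := by
  simp only [fill, Sum.elim_inr, ← sum_filter, sum_sub_distrib, sum_const, nsmul_eq_mul,
    mul_comm C, load, sum_fiberwise_eq_sum_filter, mem_filter, mem_univ, true_and]

lemma splittings_fill_le [Fintype I] [Fintype K] [LinearOrder R] :
    splittings (fill σ x owner C) ≤ ∑ k, (#{i | owner i = k} - 1) := by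
  rw [splittings, Fintype.sum_sum_type]
  have hinl : ∀ j, #{i | 0 < fill σ x owner C (.inl j) i} ≤ 1 := fun j =>
    (card_le_card (t := {σ j}) fun i hi => mem_singleton.mpr <| by
      by_contra h
      rw [mem_filter_univ] at hi
      simp [fill, Ne.symm h] at hi).trans_eq (card_singleton _)
  simp only [Nat.sub_eq_zero_of_le (hinl _), sum_const_zero, zero_add]
  refine sum_le_sum fun k _ => Nat.sub_le_sub_right (card_le_card fun i hi => ?_) 1
  rw [mem_filter_univ] at hi ⊢
  by_contra h
  simp [fill, h] at hi

end Fill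

end Allocation

namespace SubsetSumReduction

open Allocation

variable {n s : ℕ}

/-- The new job that tops up machine `i`: in the indexing of `x2jobs`, job `0` has length
`S₀ + T`, job `1` has length `2S₀(s+1) - T`, and the others have length `2S₀`. -/
def owner (hsn : s + 2 ≤ n) (i : Fin n) : Fin (n - s) :=
  ⟨if (i : ℕ) = 0 then 0 else if (i : ℕ) ≤ s + 1 then 1 else i - s, by
    have := i.isLt; split_ifs <;> omega⟩

lemma card_owner_fiber (hsn : s + 2 ≤ n) (k : Fin (n - s)) :
    #{i | owner hsn i = k} = if (k : ℕ) = 1 then s + 1 else 1 := by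
  have := k.isLt
  split_ifs with hk
  · convert Fin.card_Icc (⟨1, by omega⟩ : Fin n) ⟨s + 1, by omega⟩ using 2
    · ext i
      simp only [mem_filter_univ, mem_Icc, owner, Fin.ext_iff, Fin.le_iff_val_le_val, hk]
      grind
    · simp
  · rw [card_eq_one]
    refine ⟨⟨if (k : ℕ) = 0 then 0 else s + k, by split_ifs <;> omega⟩, ?_⟩
    ext i
    simp only [mem_filter_univ, mem_singleton, owner, Fin.ext_iff]
    grind

lemma sum_card_owner_fiber_sub_one (hsn : s + 2 ≤ n) :
    ∑ k, (#{i | owner hsn i = k} - 1) = s := by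
  simp only [card_owner_fiber]
  refine (sum_congr rfl fun k _ => ?_).trans
    (Fintype.sum_ite_eq' (⟨1, by omega⟩ : Fin (n - s)) fun _ => s)
  simp only [Fin.ext_iff]
  split_ifs <;> simp_all

variable {m : ℕ} {x1 : Fin m → ℕ} {S0 T : ℕ}

lemma cast_x2jobs_inr (hTS : T < S0) (k : Fin (n - s)) :
    (x2jobs m x1 n s S0 T (.inr k) : ℚ) =
      if (k : ℕ) = 0 then (S0 + T : ℚ)
      else if (k : ℕ) = 1 then 2 * S0 * (s + 1) - T else 2 * S0 := by
  have hT : T ≤ 2 * S0 * (s + 1) := by nlinarith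
  simp only [x2jobs, Sum.elim_inr]
  split_ifs <;> push_cast [Nat.cast_sub hT] <;> ring

def subsetPlacement (hsn : s + 2 ≤ n) (W : Finset (Fin m)) (j : Fin m) : Fin n :=
  if j ∈ W then ⟨1, by omega⟩ else ⟨0, by omega⟩

lemma val_owner_subsetPlacement (hsn : s + 2 ≤ n) (W : Finset (Fin m)) (j : Fin m) :
    (owner hsn (subsetPlacement hsn W j) : ℕ) = if j ∈ W then 1 else 0 := by
  unfold subsetPlacement
  split_ifs <;> simp [owner]

lemma sum_owner_subsetPlacement (hsn : s + 2 ≤ n) (W : Finset (Fin m)) (x : Fin m → ℚ)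
    (k : Fin (n - s)) :
    ∑ j, (if owner hsn (subsetPlacement hsn W j) = k then x j else 0) =
      if (k : ℕ) = 0 then ∑ j ∈ Wᶜ, x j else if (k : ℕ) = 1 then ∑ j ∈ W, x j else 0 := by
  simp only [Fin.ext_iff, val_owner_subsetPlacement]
  obtain ⟨k, hk⟩ := k
  rcases k with _ | _ | k <;> simp [sum_ite, ite_eq_iff, ← compl_filter]

lemma sum_fill_subsetPlacement_eq_x2jobs (hsn : s + 2 ≤ n) (hS0 : S0 = ∑ j, x1 j) (hTS : T < S0)
    {W : Finset (Fin m)} (hW : ∑ j ∈ W, x1 j = T) (p : Fin m ⊕ Fin (n - s)) :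
    ∑ i, fill (subsetPlacement hsn W) (fun j => (x1 j : ℚ)) (owner hsn) (2 * S0) p i =
      x2jobs m x1 n s S0 T p := by
  rcases p with j | k
  · simp [sum_fill_inl, x2jobs]
  · have hWq : ∑ j ∈ W, (x1 j : ℚ) = T := by exact_mod_cast hW
    have hWcq : ∑ j ∈ Wᶜ, (x1 j : ℚ) = S0 - T := by
      rw [eq_sub_iff_add_eq, ← hWq, sum_compl_add_sum, hS0, Nat.cast_sum]
    rw [sum_fill_inr, card_owner_fiber, sum_owner_subsetPlacement, cast_x2jobs_inr hTS, hWq, hWcq]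
    split_ifs <;> (try omega) <;> push_cast <;> ring

lemma exists_subset_sum_eq_of_sum_x2jobs_eq (hsn : s + 2 ≤ n) (hTS : T < S0)
    {U : Finset (Fin m ⊕ Fin (n - s))} (hU : U ⊆ univ.erase (.inr ⟨1, by omega⟩))
    (hUsum : ∑ p ∈ U, x2jobs m x1 n s S0 T p = T) : ∃ W : Finset (Fin m), ∑ j ∈ W, x1 j = T := by
  have hinr : ∀ k, .inr k ∉ U := fun k hk => by
    have hle : x2jobs m x1 n s S0 T (.inr k) ≤ T :=
      (single_le_sum (f := x2jobs m x1 n s S0 T) (fun _ _ => Nat.zero_le _) hk).trans_eq hUsum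
    have hk1 : (k : ℕ) ≠ 1 := fun h => (mem_erase.mp (hU hk)).1 (congrArg _ (Fin.ext h))
    simp only [x2jobs, Sum.elim_inr] at hle
    split_ifs at hle <;> omega
  refine ⟨({j | .inl j ∈ U} : Finset (Fin m)), ?_⟩
  rw [← hUsum, ← univ_inter U, ← sum_ite_mem, Fintype.sum_sum_type, sum_filter]
  simp [hinr, x2jobs]

end SubsetSumReduction

open Allocation SubsetSumReduction

theorem stmt_15_general (n s : ℕ) (hn : 2 ≤ n) (hs : s ≤ n - 2)
    (m : ℕ) (x1 : Fin m → ℕ)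
    (S0 : ℕ) (hS0 : S0 = ∑ j, x1 j)
    (T : ℕ) (hTS : T < S0) :
    (∃ W : Finset (Fin m), ∑ j ∈ W, x1 j = T) ↔
    (∃ f : (Fin m ⊕ Fin (n - s)) → Fin n → ℚ,
        (∀ j i, 0 ≤ f j i) ∧
        (∀ j, ∑ i, f j i = (x2jobs m x1 n s S0 T j : ℚ)) ∧
        (∑ j : Fin m ⊕ Fin (n - s),
            ((Finset.univ.filter (fun i => 0 < f j i)).card - 1)) ≤ s ∧
        (∀ i : Fin n, ∑ j, f j i = 2 * (S0 : ℚ))) := by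
  have hsn : s + 2 ≤ n := by omega
  constructor
  · rintro ⟨W, hW⟩
    have hx : ∀ j, (0 : ℚ) ≤ x1 j := fun j => Nat.cast_nonneg _
    have hS0q : ∑ j, (x1 j : ℚ) = S0 := by exact_mod_cast hS0.symm
    have hload : ∀ i, load (subsetPlacement hsn W) (fun j => (x1 j : ℚ)) i ≤ 2 * S0 := fun i =>
      (load_le_sum hx i).trans (by rw [hS0q]; linarith [(Nat.cast_nonneg S0 : (0 : ℚ) ≤ S0)])
    exact ⟨_, fill_nonneg hx hload, sum_fill_subsetPlacement_eq_x2jobs hsn hS0 hTS hW,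
      splittings_fill_le.trans_eq (sum_card_owner_fiber_sub_one hsn), sum_fill_apply⟩
  · rintro ⟨f, hf, hrow, hsplit, hcol⟩
    have hTSq : (T : ℚ) < S0 := by exact_mod_cast hTS
    have hB := cast_x2jobs_inr (m := m) (x1 := x1) hTS (⟨1, by omega⟩ : Fin (n - s))
    simp only [one_ne_zero, if_false, if_true] at hB
    obtain ⟨U, hU, hUsum⟩ := exists_subset_sum_eq_of_splittings_le hf (by positivity) hcol hsplit
      (.inr ⟨1, by omega⟩) (by rw [hrow, hB]; linarith)
    simp only [hrow, hB, sub_sub_cancel] at hUsum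
    exact exists_subset_sum_eq_of_sum_x2jobs_eq hsn hTS hU (by exact_mod_cast hUsum)

/-- hardness of bounded splittings, reduction correctness: `X₁` has a subset of
sum exactly `T` iff `X₂` admits a fractional allocation among `n` identical machines with at
most `s` splittings in which every machine's completion time equals `2S₀`. -/
theorem stmt_15 (n s : ℕ) (hn : 2 ≤ n) (hs : s ≤ n - 2)
    (m : ℕ) (x1 : Fin m → ℕ) (hx1 : ∀ j, 0 < x1 j)
    (S0 : ℕ) (hS0 : S0 = ∑ j, x1 j)
    (T : ℕ) (hT0 : 0 < T) (hTS : T < S0) :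
    (∃ W : Finset (Fin m), ∑ j ∈ W, x1 j = T) ↔
    (∃ f : (Fin m ⊕ Fin (n - s)) → Fin n → ℚ,
        (∀ j i, 0 ≤ f j i) ∧
        (∀ j, ∑ i, f j i = (x2jobs m x1 n s S0 T j : ℚ)) ∧
        (∑ j : Fin m ⊕ Fin (n - s),
            ((Finset.univ.filter (fun i => 0 < f j i)).card - 1)) ≤ s ∧
        (∀ i : Fin n, ∑ j, f j i = 2 * (S0 : ℚ))) :=
  stmt_15_general n s hn hs m x1 S0 hS0 T hTS
end
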